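/- arXiv:0904.2658 — 10 statements merged into one kernel-verified Lean document; each statement's English description precedes it below -/
import Mathlib

section
/- Let D be a 2-connected rooted digraph. Then there exists an r-r numbering of D, i.e. a linear ordering σ of V(D)−r such that for every vertex x ≠ r, either x is an outneighbour of r, or there exist two in-neighbours u and v of x with σ(u) < σ(x) < σ(v). -/
variable {V : Type*}

/-- Reachability by directed paths in a digraph given by its arc relation. -/
def Reaches (A : V → V → Prop) : V → V → Prop :=
  Relation.ReflTransGen A

/-- Reachability by directed paths avoiding the vertex set `S` (i.e. in `D − S`). -/
def ReachesAvoiding (A : V → V → Prop) (S : Set V) : V → V → Prop :=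
  Relation.ReflTransGen (fun u v => A u v ∧ u ∉ S ∧ v ∉ S)

/-- A rooted digraph: loopless, the distinguished root `r` has indegree 0 and at
least two outneighbours, and there is no arc `(x, y)` with `x ≠ r` and `y` an
outneighbour of `r`. -/
def IsRootedDigraph (A : V → V → Prop) (r : V) : Prop :=
  (∀ v, ¬ A v v) ∧
  (∀ v, ¬ A v r) ∧
  (∃ u v, u ≠ v ∧ A r u ∧ A r v) ∧
  ∀ x y, x ≠ r → A r y → ¬ A x y

/-- A rooted digraph is connected if every vertex is reachable from the root. -/
def RConnected (A : V → V → Prop) (r : V) : Prop :=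
  ∀ v, Reaches A r v

/-- `S` is a cut of the rooted digraph: `S ⊆ V − r` and some vertex outside `S`
is the endpoint of no directed path from `r` in `D − S`. -/
def IsCut (A : V → V → Prop) (r : V) (S : Set V) : Prop :=
  r ∉ S ∧ ∃ z ∉ S, ¬ ReachesAvoiding A S r z

/-- A rooted digraph is 2-connected if it has no cut of size at most 1. -/
def TwoConnected (A : V → V → Prop) (r : V) : Prop :=
  ∀ S : Set V, S.ncard ≤ 1 → ¬ IsCut A r S

/-- `T` is an outbranching of the rooted digraph `(A, r)`: a spanning directed
tree rooted at `r` (every vertex other than `r` has a unique in-arc in `T`, the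
root has none, and every vertex is reachable from `r` in `T`). -/
def IsOutbranching (A : V → V → Prop) (r : V) (T : V → V → Prop) : Prop :=
  (∀ u v, T u v → A u v) ∧
  (∀ v, v ≠ r → ∃! u, T u v) ∧
  (∀ u, ¬ T u r) ∧
  ∀ v, Reaches T r v

/-- The number of leaves (vertices of outdegree 0) of an outbranching `T`. -/
noncomputable def leafCount (T : V → V → Prop) : ℕ :=
  {v | ∀ u, ¬ T v u}.ncard

/-- The maximum number of leaves over all outbranchings. -/
noncomputable def maxleaf (A : V → V → Prop) (r : V) : ℕ :=
  sSup {n | ∃ T : V → V → Prop, IsOutbranching A r T ∧ n = leafCount T}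

/-- Indegree of a vertex. -/
noncomputable def indeg (A : V → V → Prop) (v : V) : ℕ := {u | A u v}.ncard

/-- Outdegree of a vertex. -/
noncomputable def outdeg (A : V → V → Prop) (v : V) : ℕ := {u | A v u}.ncard

/-- A vertex is nice if it has a simple in-arc, i.e. an in-arc not belonging to
a 2-circuit. -/
def Nice (A : V → V → Prop) (v : V) : Prop := ∃ u, A u v ∧ ¬ A v u

/-- A vertex is special if it has indegree at least 3 or a simple in-arc. -/
def Special (A : V → V → Prop) (v : V) : Prop := 3 ≤ indeg A v ∨ Nice A v

/-- A non-special vertex: distinct from `r`, with exactly two in-neighbours,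
both of which are also its outneighbours. -/
def NonSpecial (A : V → V → Prop) (r : V) (v : V) : Prop :=
  v ≠ r ∧ ∃ a b, a ≠ b ∧ {u | A u v} = {a, b} ∧ A v a ∧ A v b

/-- `x 0, …, x 4` is a bipath of length 4: the arcs of `D` incident to the
internal vertices `x 1, x 2, x 3` are exactly the arcs `(x i, x (i+1))` and
`(x (i+1), x i)` of the bipath. -/
def IsBipath4 (A : V → V → Prop) (x : Fin 5 → V) : Prop :=
  Function.Injective x ∧
  ∀ i : Fin 5, 0 < (i : ℕ) → (i : ℕ) < 4 →
    (∀ v, A (x i) v ↔ v = x (i - 1) ∨ v = x (i + 1)) ∧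
    (∀ v, A v (x i) ↔ v = x (i - 1) ∨ v = x (i + 1))

/-- A digraph is acyclic if it has no directed cycle. -/
def Acyclic (A : V → V → Prop) : Prop :=
  ∀ u v, A u v → ¬ Reaches A v u

/-!
Induction on the number of vertices, for a digraph `B` on a vertex set `W` in which a set `N`
of sources plays the role of the outneighbours of the root. Pick `x ∉ N` and an in-neighbour
`u` of `x` such that `u` is reached from `N` avoiding every pair `{x, s}` that separates some
vertex from `N`. Deleting `x` and handing its out-arcs to `u` then preserves 2-connectivity, and
a numbering of the smaller digraph extends by placing `x` immediately next to `u`, on the side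
away from a second in-neighbour of `x`.

Such a pair exists: let `{p, q}` be a separating pair with the largest fragment, `{p, c}` one
whose fragment is contained in it and is as small as possible, and `v` an out-neighbour of `p`
in that fragment. If `(v, p)` failed, some pair `{v, s}` with a nonempty fragment would
separate `p`: for `s = p` the fragment of `{p, v}` lies strictly inside that of `{p, c}`, and
otherwise `{q, s}` has a larger fragment than `{p, q}`.
-/

open Relation

/-- With `N` the outneighbours of the root, this is reachability from the root in `D − S`. -/
def ReachFrom (B : V → V → Prop) (N S : Set V) (z : V) : Prop :=
  ∃ n ∈ N, n ∉ S ∧ ReachesAvoiding B S n z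

namespace ReachFrom

variable {B : V → V → Prop} {N S S' T : Set V} {a b p z : V}

theorem of_mem (hN : z ∈ N) (hS : z ∉ S) : ReachFrom B N S z :=
  ⟨z, hN, hS, .refl⟩

theorem notMem (h : ReachFrom B N S z) : z ∉ S := by
  obtain ⟨n, -, hnS, hp⟩ := h
  induction hp with
  | refl => exact hnS
  | tail _ hab _ => exact hab.2.2

theorem tail (h : ReachFrom B N S a) (hab : B a b) (hb : b ∉ S) : ReachFrom B N S b := by
  have ha := h.notMem
  obtain ⟨n, hn, hnS, hp⟩ := h
  exact ⟨n, hn, hnS, hp.tail ⟨hab, ha, hb⟩⟩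

theorem trans (h : ReachFrom B N S a) (hp : ReachesAvoiding B S a z) : ReachFrom B N S z := by
  obtain ⟨n, hn, hnS, hp₀⟩ := h
  exact ⟨n, hn, hnS, hp₀.trans hp⟩

theorem mono (hS : S ⊆ S') (h : ReachFrom B N S' z) : ReachFrom B N S z := by
  obtain ⟨n, hn, hnS, hp⟩ := h
  refine ⟨n, hn, fun h => hnS (hS h), ReflTransGen.mono (fun _ _ hab => ?_) _ _ hp⟩
  exact ⟨hab.1, fun h => hab.2.1 (hS h), fun h => hab.2.2 (hS h)⟩

theorem exists_pred (h : ReachFrom B N S z) (hz : z ∉ N) :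
    ∃ w, B w z ∧ ReachFrom B N S w := by
  obtain ⟨n, hn, hnS, hp⟩ := h
  rcases hp.cases_tail with rfl | ⟨w, hnw, hwz⟩
  · exact absurd hn hz
  · exact ⟨w, hwz.1, n, hn, hnS, hnw⟩

theorem union_of_no_entry (hNT : ∀ n ∈ N, n ∉ S → n ∉ T)
    (hT : ∀ a b, ReachFrom B N (S ∪ T) a → B a b → b ∉ S → b ∉ T)
    (h : ReachFrom B N S z) : ReachFrom B N (S ∪ T) z := by
  obtain ⟨n, hn, hnS, hp⟩ := h
  induction hp with
  | refl => exact of_mem hn fun h => h.elim hnS (hNT n hn hnS)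
  | tail _ hab ih =>
    exact ih.tail hab.1 fun h => h.elim hab.2.2 (hT _ _ ih hab.1 hab.2.2)

theorem exists_outNeighbour_reachesAvoiding (h : ReachFrom B N S z)
    (hz : ¬ ReachFrom B N (insert p S) z) (hzp : z ≠ p) :
    ∃ v, B p v ∧ v ∉ insert p S ∧ ReachesAvoiding B (insert p S) v z := by
  obtain ⟨n, hn, hnS, hp⟩ := h
  induction hp with
  | refl => exact absurd (of_mem hn (by simp [hzp, hnS])) hz
  | @tail b c _ hbc ih =>
    have hc : c ∉ insert p S := by simp [hzp, hbc.2.2]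
    by_cases hbp : b = p
    · exact ⟨c, hbp ▸ hbc.1, hc, .refl⟩
    by_cases hb : ReachFrom B N (insert p S) b
    · exact absurd (hb.tail hbc.1 hc) hz
    obtain ⟨v, hpv, hv, hvb⟩ := ih hb hbp
    exact ⟨v, hpv, hv, hvb.tail ⟨hbc.1, by simp [hbp, hbc.2.1], hc⟩⟩

end ReachFrom

def TwoConnectedFrom (B : V → V → Prop) (N W : Set V) : Prop :=
  ∀ S : Set V, S.Subsingleton → ∀ z ∈ W, z ∉ S → ReachFrom B N S z

theorem TwoConnectedFrom.reachFrom_singleton {B : V → V → Prop} {N W : Set V} {s z : V}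
    (h : TwoConnectedFrom B N W) (hz : z ∈ W) (hzs : z ≠ s) : ReachFrom B N {s} z :=
  h {s} Set.subsingleton_singleton z hz hzs

def fragment (B : V → V → Prop) (N W : Set V) (p c : V) : Set V :=
  {z | z ∈ W ∧ z ≠ p ∧ z ≠ c ∧ ¬ ReachFrom B N {p, c} z}

section Fragment

variable {B : V → V → Prop} {N W : Set V} {c p w y z : V}

theorem fragment_comm : fragment B N W p c = fragment B N W c p := by
  simp only [fragment, Set.pair_comm p c, and_left_comm (a := _ ≠ p)]

theorem notMem_of_mem_fragment (hz : z ∈ fragment B N W p c) : z ∉ N := fun hN =>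
  hz.2.2.2 (.of_mem hN (by simp [hz.2.1, hz.2.2.1]))

theorem notMem_fragment_of_reachFrom {S : Set V} (h : ReachFrom B N S z) (hS : {p, c} ⊆ S) :
    z ∉ fragment B N W p c := fun hz => hz.2.2.2 (h.mono hS)

theorem mem_fragment_of_mem_fragment (hy : y ∈ fragment B N W p c)
    (hw : w ∈ fragment B N W p y) (hwc : w ≠ c) : w ∈ fragment B N W p c := by
  refine ⟨hw.1, hw.2.1, hwc, fun hr => hw.2.2.2 ?_⟩
  refine (hr.union_of_no_entry (T := {y}) ?_ ?_).mono ?_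
  · exact fun n hn _ hny => notMem_of_mem_fragment hy (hny ▸ hn)
  · rintro a b ha hab hb rfl
    exact notMem_fragment_of_reachFrom ((ha.mono Set.subset_union_left).tail hab hb) le_rfl hy
  · exact Set.pair_subset (.inl (.inl rfl)) (.inr rfl)

variable (h2 : TwoConnectedFrom B N W)
include h2

theorem ne_of_mem_fragment (hz : z ∈ fragment B N W p c) : p ≠ c := by
  rintro rfl
  exact hz.2.2.2 (by simpa using h2.reachFrom_singleton hz.1 hz.2.1)

theorem exists_outNeighbour_mem_fragment (hBW : ∀ a b, B a b → a ∈ W ∧ b ∈ W)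
    (hz : z ∈ fragment B N W p c) : ∃ v, B p v ∧ v ∈ fragment B N W p c := by
  obtain ⟨v, hpv, hv, hvz⟩ := ReachFrom.exists_outNeighbour_reachesAvoiding
    (h2.reachFrom_singleton hz.1 hz.2.2.1) hz.2.2.2 hz.2.1
  simp only [Set.mem_insert_iff, Set.mem_singleton_iff, not_or] at hv
  exact ⟨v, hpv, (hBW p v hpv).2, hv.1, hv.2, fun hr => hz.2.2.2 (hr.trans hvz)⟩

theorem notMem_fragment_of_mem_fragment (hy : y ∈ fragment B N W p c) :
    c ∉ fragment B N W p y := by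
  intro hc
  have hT : ∀ a b, ReachFrom B N ({p} ∪ (insert c (fragment B N W p c))) a → B a b →
      b ∉ ({p} : Set V) → b ∉ insert c (fragment B N W p c) := by
    rintro a b ha hab hbp (rfl | hb)
    · refine notMem_fragment_of_reachFrom ((ha.mono ?_).tail hab ?_) le_rfl hc
      · exact Set.pair_subset (.inl rfl) (.inr (.inr hy))
      · simp [hc.2.1, hc.2.2.1]
    · refine notMem_fragment_of_reachFrom ((ha.mono ?_).tail hab ?_) le_rfl hb
      · exact Set.pair_subset (.inl rfl) (.inr (.inl rfl))
      · simp [hb.2.1, hb.2.2.1]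
  have hyT := ((h2.reachFrom_singleton hy.1 hy.2.1).union_of_no_entry ?_ hT).notMem
  · exact hyT (.inr (.inr hy))
  · rintro n hn - (rfl | hnF)
    exacts [notMem_of_mem_fragment hc hn, notMem_of_mem_fragment hnF hn]

theorem fragment_ssubset_of_mem (hy : y ∈ fragment B N W p c) :
    fragment B N W p y ⊂ fragment B N W p c := by
  refine Set.ssubset_iff_subset_ne.2 ⟨fun w hw => ?_, fun h => (h ▸ hy).2.2.1 rfl⟩
  exact mem_fragment_of_mem_fragment hy hw fun hwc =>
    notMem_fragment_of_mem_fragment h2 hy (hwc ▸ hw)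

end Fragment

section GoodPair

variable {B : V → V → Prop} {N W : Set V} {c p q t v y : V}

def IsGoodPair (B : V → V → Prop) (N W : Set V) (x u : V) : Prop :=
  ∀ s, (fragment B N W x s).Nonempty → ReachFrom B N {x, s} u

variable [Finite V] (h2 : TwoConnectedFrom B N W)
include h2

/-- Otherwise `{q, t}` separates `p` together with the whole fragment of `{p, q}`. -/
theorem notMem_fragment_of_forall_ncard_le
    (hmax : ∀ a b, (fragment B N W a b).ncard ≤ (fragment B N W p q).ncard)
    (hy : y ∈ fragment B N W p q) : p ∉ fragment B N W y t := by
  intro hp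
  set K := fragment B N W p q
  have hK : ∀ z, ReachFrom B N {q, t} z → ReachFrom B N ({q, t} ∪ insert p K) z := by
    refine fun z hz => hz.union_of_no_entry ?_ ?_
    · rintro n hn - (rfl | hnK)
      exacts [notMem_of_mem_fragment hp hn, notMem_of_mem_fragment hnK hn]
    · rintro a b ha hab hb (rfl | hbK)
      · refine notMem_fragment_of_reachFrom ((ha.mono ?_).tail hab ?_) le_rfl hp
        · exact Set.pair_subset (.inr (.inr hy)) (.inl (.inr rfl))
        · simp [hp.2.1, hp.2.2.1]
      · refine notMem_fragment_of_reachFrom ((ha.mono ?_).tail hab ?_) le_rfl hbK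
        · exact Set.pair_subset (.inr (.inl rfl)) (.inl (.inl rfl))
        · simp [hbK.2.1, hbK.2.2.1]
  have hunreach : ∀ w ∈ insert p K, ¬ ReachFrom B N {q, t} w :=
    fun w hw hr => (hK w hr).notMem (.inr hw)
  have hp' : p ∈ fragment B N W q t :=
    ⟨hp.1, ne_of_mem_fragment h2 hy, hp.2.2.1, hunreach p (.inl rfl)⟩
  by_cases htK : t ∈ K
  · exact notMem_fragment_of_mem_fragment h2 (fragment_comm ▸ htK) hp'
  have hsub : insert p K ⊆ fragment B N W q t := by
    rintro w (rfl | hw)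
    · exact hp'
    · exact ⟨hw.1, hw.2.2.1, fun hwt => htK (hwt ▸ hw), hunreach w (.inr hw)⟩
  have hpK : p ∉ K := fun h => h.2.1 rfl
  exact (hmax q t).not_gt
    (Set.ncard_lt_ncard ((Set.ssubset_insert hpK).trans_le hsub) (Set.toFinite _))

theorem isGoodPair_of_minimal (hpW : p ∈ W)
    (hmax : ∀ a b, (fragment B N W a b).ncard ≤ (fragment B N W p q).ncard)
    (hc : fragment B N W p c ⊆ fragment B N W p q)
    (hmin : ∀ c', (fragment B N W p c').Nonempty →
      fragment B N W p c' ⊆ fragment B N W p q →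
      (fragment B N W p c).ncard ≤ (fragment B N W p c').ncard)
    (hv : v ∈ fragment B N W p c) : IsGoodPair B N W v p := by
  rintro s ⟨z, hz⟩
  by_contra hp
  by_cases hsp : s = p
  · subst hsp
    have hlt := fragment_ssubset_of_mem h2 hv
    rw [fragment_comm] at hz
    exact (hmin v ⟨z, hz⟩ (hlt.subset.trans hc)).not_gt
      (Set.ncard_lt_ncard hlt (Set.toFinite _))
  · exact notMem_fragment_of_forall_ncard_le h2 hmax (hc hv)
      ⟨hpW, fun h => hv.2.1 h.symm, fun h => hsp h.symm, hp⟩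

theorem exists_isGoodPair (hBW : ∀ a b, B a b → a ∈ W ∧ b ∈ W)
    (hx : ∃ x ∈ W, x ∉ N) :
    ∃ x u, x ∈ W ∧ x ∉ N ∧ B u x ∧ IsGoodPair B N W x u := by
  by_cases hcut : ∃ a b, (fragment B N W a b).Nonempty
  · obtain ⟨a, b, hab⟩ := hcut
    have : Nonempty (V × V) := ⟨(a, b)⟩
    obtain ⟨⟨p, q⟩, hmax⟩ :=
      Finite.exists_max fun ab : V × V => (fragment B N W ab.1 ab.2).ncard
    have hpq : (fragment B N W p q).Nonempty := Set.nonempty_of_ncard_ne_zero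
      (((Set.ncard_pos (Set.toFinite _)).2 hab).trans_le (hmax (a, b))).ne'
    obtain ⟨c, ⟨⟨z, hz⟩, hc⟩, hmin⟩ := Set.exists_min_image
      {c | (fragment B N W p c).Nonempty ∧ fragment B N W p c ⊆ fragment B N W p q}
      (fun c => (fragment B N W p c).ncard) (Set.toFinite _) ⟨q, hpq, le_rfl⟩
    obtain ⟨v, hpv, hv⟩ := exists_outNeighbour_mem_fragment h2 hBW hz
    exact ⟨v, p, hv.1, notMem_of_mem_fragment hv, hpv, isGoodPair_of_minimal h2
      (hBW p v hpv).1 (fun a b => hmax (a, b)) hc (fun c' h h' => hmin c' ⟨h, h'⟩) hv⟩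
  · obtain ⟨x, hxW, hxN⟩ := hx
    obtain ⟨u, hux, -⟩ :=
      (h2 ∅ Set.subsingleton_empty x hxW (Set.notMem_empty x)).exists_pred hxN
    exact ⟨x, u, hxW, hxN, hux, fun s hs => absurd ⟨x, s, hs⟩ hcut⟩

end GoodPair

/-- Delete `x` and let `u` take over its out-arcs. -/
def reroute (B : V → V → Prop) (x u : V) : V → V → Prop :=
  fun a b => (B a b ∧ a ≠ x ∧ b ≠ x) ∨ (a = u ∧ B x b ∧ b ≠ u ∧ b ≠ x)

section Reroute

variable {B : V → V → Prop} {N W S : Set V} {a u x z : V}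

theorem reachesAvoiding_reroute (h : ReachesAvoiding B (insert x S) a z) :
    ReachesAvoiding (reroute B x u) S a z :=
  ReflTransGen.mono (fun _ _ h =>
    ⟨.inl ⟨h.1, fun e => h.2.1 (.inl e), fun e => h.2.2 (.inl e)⟩,
      fun e => h.2.1 (.inr e), fun e => h.2.2 (.inr e)⟩) _ _ h

theorem reachFrom_reroute (h : ReachFrom B N (insert x S) z) :
    ReachFrom (reroute B x u) N S z := by
  obtain ⟨n, hn, hnS, hp⟩ := h
  exact ⟨n, hn, fun e => hnS (.inr e), reachesAvoiding_reroute hp⟩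

theorem reroute_irrefl (hirr : ∀ v, ¬ B v v) (v : V) : ¬ reroute B x u v v := by
  rintro (h | h)
  exacts [hirr v h.1, h.2.2.1 h.1]

theorem reroute_mem (hBW : ∀ a b, B a b → a ∈ W ∧ b ∈ W) (hirr : ∀ v, ¬ B v v)
    (hux : B u x) {a b : V} (h : reroute B x u a b) : a ∈ W \ {x} ∧ b ∈ W \ {x} := by
  rcases h with ⟨hab, hax, hbx⟩ | ⟨rfl, hxb, -, hbx⟩
  · exact ⟨⟨(hBW a b hab).1, hax⟩, ⟨(hBW a b hab).2, hbx⟩⟩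
  · exact ⟨⟨(hBW a x hux).1, fun e => hirr x (e ▸ hux)⟩, ⟨(hBW x b hxb).2, hbx⟩⟩

/-- A vertex `z` that `{x, s}` separates from `N` is reached through `x`; after rerouting,
the good vertex `u`, itself reached avoiding `{x, s}`, stands in for `x`. -/
theorem reroute_reachFrom_singleton (h2 : TwoConnectedFrom B N W) (hgood : IsGoodPair B N W x u)
    {s : V} (hz : z ∈ W \ {x}) (hzs : z ≠ s) : ReachFrom (reroute B x u) N {s} z := by
  by_cases hr : ReachFrom B N {x, s} z
  · exact reachFrom_reroute hr
  have hu := reachFrom_reroute (u := u) (hgood s ⟨z, hz.1, hz.2, hzs, hr⟩)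
  obtain ⟨v, hxv, hv, hvz⟩ :=
    (h2.reachFrom_singleton hz.1 hzs).exists_outNeighbour_reachesAvoiding hr hz.2
  simp only [Set.mem_insert_iff, Set.mem_singleton_iff, not_or] at hv
  have hv' : ReachFrom (reroute B x u) N {s} v := by
    by_cases hvu : v = u
    · exact hvu ▸ hu
    · exact hu.tail (.inr ⟨rfl, hxv, hvu, hv.1⟩) hv.2
  exact hv'.trans (reachesAvoiding_reroute hvz)

theorem twoConnectedFrom_reroute (h2 : TwoConnectedFrom B N W) (hgood : IsGoodPair B N W x u) :
    TwoConnectedFrom (reroute B x u) N (W \ {x}) := by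
  intro S hS z hz hzS
  rcases hS.eq_empty_or_singleton with rfl | ⟨s, rfl⟩
  · exact (reroute_reachFrom_singleton h2 hgood hz hz.2).mono (Set.empty_subset _)
  · exact reroute_reachFrom_singleton h2 hgood hz hzS

end Reroute

def IsNumbering (B : V → V → Prop) (N W : Set V) (σ : V → ℕ) : Prop :=
  Set.InjOn σ W ∧
    ∀ z ∈ W, z ∉ N → ∃ a b, B a z ∧ B b z ∧ σ a < σ z ∧ σ z < σ b

/-- Doubling `σ` leaves the odd value `2 k + 1` free for `x`. -/
def insertAt [DecidableEq V] (σ : V → ℕ) (x : V) (k : ℕ) : V → ℕ :=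
  fun v => if v = x then 2 * k + 1 else 2 * σ v + 2

section Numbering

variable [DecidableEq V] {B : V → V → Prop} {N W : Set V} {σ : V → ℕ} {a u v w x z : V}
  {k : ℕ}

theorem insertAt_self : insertAt σ x k x = 2 * k + 1 := if_pos rfl

theorem insertAt_of_ne (h : v ≠ x) : insertAt σ x k v = 2 * σ v + 2 := if_neg h

theorem injOn_insertAt (h : Set.InjOn σ (W \ {x})) : Set.InjOn (insertAt σ x k) W := by
  intro a ha b hb hab
  by_cases hax : a = x <;> by_cases hbx : b = x
  · exact hax.trans hbx.symm
  all_goals simp only [insertAt, hax, hbx, if_true, if_false] at hab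
  · omega
  · omega
  · exact h ⟨ha, hax⟩ ⟨hb, hbx⟩ (by omega)

/-- Placing `x` next to `u` keeps every arc `u → z` of the rerouted digraph, which stands for
an arc `x → z`, on the same side of `z`. -/
theorem exists_inNeighbour_insertAt (hk : σ u ≤ k ∧ k ≤ σ u + 1) (ha : reroute B x u a z) :
    ∃ a', B a' z ∧ (σ a < σ z → insertAt σ x k a' < insertAt σ x k z) ∧
      (σ z < σ a → insertAt σ x k z < insertAt σ x k a') := by
  rcases ha with ⟨hB, hax, hzx⟩ | ⟨rfl, hxz, -, hzx⟩
  · refine ⟨a, hB, ?_⟩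
    simp only [insertAt_of_ne hax, insertAt_of_ne hzx]
    omega
  · refine ⟨x, hxz, ?_⟩
    simp only [insertAt_self, insertAt_of_ne hzx]
    omega

theorem isNumbering_insertAt (hσ : IsNumbering (reroute B x u) N (W \ {x}) σ)
    (hk : σ u ≤ k ∧ k ≤ σ u + 1)
    (hx : ∃ a b, B a x ∧ B b x ∧
      insertAt σ x k a < 2 * k + 1 ∧ 2 * k + 1 < insertAt σ x k b) :
    IsNumbering B N W (insertAt σ x k) := by
  refine ⟨injOn_insertAt hσ.1, fun z hz hzN => ?_⟩
  by_cases hzx : z = x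
  · subst hzx
    simpa only [insertAt_self] using hx
  obtain ⟨a, b, ha, hb, haz, hzb⟩ := hσ.2 z ⟨hz, hzx⟩ hzN
  obtain ⟨a', ha', hlt, -⟩ := exists_inNeighbour_insertAt hk ha
  obtain ⟨b', hb', -, hgt⟩ := exists_inNeighbour_insertAt hk hb
  exact ⟨a', b', ha', hb', hlt haz, hgt hzb⟩

/-- `x` goes right next to `u`, on the side away from its second in-neighbour `w`. -/
theorem exists_isNumbering_of_reroute (hux : B u x) (hwx : B w x) (hwu : w ≠ u)
    (hu : u ∈ W \ {x}) (hw : w ∈ W \ {x}) (hσ : IsNumbering (reroute B x u) N (W \ {x}) σ) :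
    ∃ σ', IsNumbering B N W σ' := by
  rcases lt_or_gt_of_ne fun e => hwu (hσ.1 hw hu e) with hlt | hgt
  · refine ⟨_, isNumbering_insertAt (k := σ u) hσ ⟨le_rfl, by omega⟩
      ⟨w, u, hwx, hux, ?_⟩⟩
    simp only [insertAt_of_ne hw.2, insertAt_of_ne hu.2]
    omega
  · refine ⟨_, isNumbering_insertAt (k := σ u + 1) hσ ⟨by omega, le_rfl⟩
      ⟨u, w, hux, hwx, ?_⟩⟩
    simp only [insertAt_of_ne hw.2, insertAt_of_ne hu.2]
    omega

end Numbering

theorem exists_isNumbering [Finite V] {N : Set V} (W : Set V) (B : V → V → Prop)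
    (hirr : ∀ v, ¬ B v v) (hBW : ∀ a b, B a b → a ∈ W ∧ b ∈ W)
    (h2 : TwoConnectedFrom B N W) : ∃ σ, IsNumbering B N W σ := by
  classical
  induction W using WellFoundedLT.induction generalizing B with
  | ind W ih =>
    by_cases hN : ∀ x ∈ W, x ∈ N
    · exact ⟨fun v => Finite.equivFin V v,
        fun a _ b _ h => (Finite.equivFin V).injective (Fin.val_injective h),
        fun z hz hzN => absurd (hN z hz) hzN⟩
    obtain ⟨x, u, hxW, hxN, hux, hgood⟩ := exists_isGoodPair h2 hBW (by simpa using hN)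
    have hmem : ∀ v, B v x → v ∈ W \ {x} :=
      fun v hv => ⟨(hBW v x hv).1, fun e => hirr x (e ▸ hv)⟩
    obtain ⟨w, hwx, hw⟩ :=
      (h2.reachFrom_singleton hxW fun e => (hmem u hux).2 e.symm).exists_pred hxN
    obtain ⟨σ, hσ⟩ := ih (W \ {x}) (Set.sdiff_singleton_ssubset.2 hxW) (reroute B x u)
      (reroute_irrefl hirr) (fun _ _ h => reroute_mem hBW hirr hux h)
      (twoConnectedFrom_reroute h2 hgood)
    exact exists_isNumbering_of_reroute hux hwx (fun e => hw.notMem e) (hmem u hux)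
      (hmem w hwx) hσ

theorem reachFrom_of_reachesAvoiding {A : V → V → Prop} {r z : V} {S : Set V}
    (h : ReachesAvoiding A S r z) (hz : z ≠ r) :
    ReachFrom (fun a b => A a b ∧ a ≠ r) {v | A r v} (insert r S) z := by
  induction h with
  | refl => exact absurd rfl hz
  | @tail b c _ hbc ih =>
    have hc : c ∉ insert r S := by simp [hz, hbc.2.2]
    by_cases hbr : b = r
    · exact .of_mem (hbr ▸ hbc.1) hc
    · exact (ih hbr).tail ⟨hbc.1, hbr⟩ hc

/-- Every 2-connected rooted digraph admits an `r-r` numbering: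
a linear ordering `σ` of `V − r` such that every vertex `x ≠ r` is either an
outneighbour of `r` or has two in-neighbours `u, v` with `σ u < σ x < σ v`. -/
theorem rr_numbering_exists [Fintype V] (A : V → V → Prop) (r : V)
    (hD : IsRootedDigraph A r) (h2 : TwoConnected A r) :
    ∃ σ : V → ℕ, Set.InjOn σ {v | v ≠ r} ∧
      ∀ x, x ≠ r →
        (A r x ∨ ∃ u v, u ≠ r ∧ v ≠ r ∧ A u x ∧ A v x ∧ σ u < σ x ∧ σ x < σ v) := by
  obtain ⟨hloop, hr, -, -⟩ := hD
  have h2B : TwoConnectedFrom (fun a b => A a b ∧ a ≠ r) {v | A r v} {v | v ≠ r} := by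
    intro S hS z hz hzS
    have hS' : (S \ {r}).ncard ≤ 1 :=
      Set.ncard_le_one_iff_subsingleton.2 (hS.anti Set.sdiff_subset)
    have hreach : ReachesAvoiding A (S \ {r}) r z := by
      by_contra h
      exact h2 _ hS' ⟨fun h => h.2 rfl, z, fun h => hzS h.1, h⟩
    exact (reachFrom_of_reachesAvoiding hreach hz).mono (Set.subset_insert_sdiff_singleton r S)
  obtain ⟨σ, hinj, hσ⟩ := exists_isNumbering {v | v ≠ r} _ (fun v h => hloop v h.1)
    (fun a b h => ⟨h.2, fun e => hr a (e ▸ h.1)⟩) h2B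
  refine ⟨σ, hinj, fun x hx => or_iff_not_imp_left.2 fun hrx => ?_⟩
  obtain ⟨a, b, ha, hb, hax, hxb⟩ := hσ x hx hrx
  exact ⟨a, b, ha.2, hb.2, ha.1, hb.1, hax, hxb⟩
end

section
/- Let D be a 2-connected rooted digraph. Then there exists an acyclic connected spanning subdigraph A of D which contains at least half of the arcs of D−r (the digraph obtained from D by deleting r). -/
/-!
Order `V − r` by a *low-high order* `f`: an injective `f` such that every vertex that is not an
outneighbour of `r` has an in-neighbour below it and an in-neighbour above it. The arcs leaving `r`
together with the arcs of `D − r` going up along `f` then form an acyclic connected spanning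
subdigraph, and so do the arcs leaving `r` together with those going down. These two subdigraphs
share no arc of `D − r` and cover all of them, so one of them has at least half.

A low-high order is built from the top. With `E₁ = E₂` the outneighbours of `r`, pick `u ∈ E₂`
whose deletion leaves every vertex reachable from `E₁ \ {u}`, place `u` last and recurse on the
remaining vertices, where the outneighbours of `u` join `E₂` because `u` is an in-neighbour above
them. Such a `u` exists: otherwise, by 2-connectivity, every `u ∈ E₂` separates some `g u ∈ E₂`
from `E₁`, and on a cycle of `g` the first vertex `g p` entered by a path from `E₁` is reached
while avoiding `p`.
-/

variable {V : Type*}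

-- The trivial path from `s` to itself is allowed even when `s ∉ S`.
def ReachesWithin (A : V → V → Prop) (S : Set V) : V → V → Prop :=
  Relation.ReflTransGen (fun a b => A a b ∧ a ∈ S ∧ b ∈ S)

namespace ReachesWithin

variable {A : V → V → Prop} {S T : Set V} {s u v w : V}

lemma mono (hST : S ⊆ T) (h : ReachesWithin A S s v) : ReachesWithin A T s v :=
  Relation.ReflTransGen.mono (fun _ _ h => ⟨h.1, hST h.2.1, hST h.2.2⟩) _ _ h

protected lemma trans (h₁ : ReachesWithin A S s v) (h₂ : ReachesWithin A S v w) :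
    ReachesWithin A S s w :=
  Relation.ReflTransGen.trans h₁ h₂

lemma exists_first_mem {C : Set V} (h : ReachesWithin A S s v) (hv : v ∈ C) :
    ∃ c ∈ C, s ∉ C \ {c} ∧ ReachesWithin A (S \ (C \ {c})) s c := by
  induction h using Relation.ReflTransGen.head_induction_on with
  | refl => exact ⟨v, hv, fun h => h.2 rfl, .refl⟩
  | @head a b hab _ ih =>
    obtain ⟨c, hc, hbc, hpath⟩ := ih
    by_cases ha : a ∈ C
    · exact ⟨a, ha, fun h => h.2 rfl, .refl⟩
    · exact ⟨c, hc, fun h => ha h.1,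
        .head ⟨hab.1, ⟨hab.2.1, fun h => ha h.1⟩, ⟨hab.2.2, hbc⟩⟩ hpath⟩

lemma last_exit (h : ReachesWithin A S s v) (hv : v ≠ u) :
    (s ≠ u ∧ ReachesWithin A (S \ {u}) s v) ∨
      ∃ x ∈ S, x ≠ u ∧ A u x ∧ ReachesWithin A (S \ {u}) x v := by
  induction h using Relation.ReflTransGen.head_induction_on with
  | refl => exact .inl ⟨hv, .refl⟩
  | @head a b hab _ ih =>
    rcases ih with ⟨hbu, hpath⟩ | hexit
    · by_cases hau : a = u
      · exact .inr ⟨b, hab.2.2, hbu, hau ▸ hab.1, hpath⟩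
      · exact .inl ⟨hau, .head ⟨hab.1, ⟨hab.2.1, hau⟩, ⟨hab.2.2, hbu⟩⟩ hpath⟩
    · exact .inr hexit

end ReachesWithin

def IsSourceSet (A : V → V → Prop) (W E : Set V) : Prop :=
  ∀ v ∈ W, ∃ s ∈ E, ReachesWithin A W s v

def IsRobustSourceSet (A : V → V → Prop) (W E : Set V) : Prop :=
  ∀ u ∈ W, IsSourceSet A (W \ {u}) (E \ {u})

lemma IsRobustSourceSet.peel {A : V → V → Prop} {W E : Set V} (h : IsRobustSourceSet A W E)
    (u : V) : IsRobustSourceSet A (W \ {u}) ((E ∪ {x ∈ W | A u x}) \ {u}) := by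
  intro w hw v hv
  obtain ⟨s, ⟨hs, hsw⟩, hsv⟩ := h w hw.1 v ⟨hv.1.1, hv.2⟩
  rcases hsv.last_exit hv.1.2 with ⟨hsu, hsv⟩ | ⟨x, hx, hxu, hux, hxv⟩
  · exact ⟨s, ⟨⟨.inl hs, hsu⟩, hsw⟩, Set.sdiff_sdiff_comm ▸ hsv⟩
  · exact ⟨x, ⟨⟨.inr ⟨hx.1, hux⟩, hxu⟩, hx.2⟩, Set.sdiff_sdiff_comm ▸ hxv⟩

lemma Function.periodicPts_nonempty {α : Type*} [Finite α] [Nonempty α] (g : α → α) :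
    (Function.periodicPts g).Nonempty := by
  obtain ⟨x⟩ := ‹Nonempty α›
  obtain ⟨i, j, hij, heq⟩ := Finite.exists_ne_map_eq_of_infinite (fun n : ℕ => g^[n] x)
  wlog hlt : i < j generalizing i j
  · exact this j i hij.symm heq.symm (by omega)
  refine ⟨g^[i] x, Function.mk_mem_periodicPts (Nat.sub_pos_of_lt hlt) ?_⟩
  rw [Function.IsPeriodicPt, Function.IsFixedPt, ← Function.iterate_add_apply,
    Nat.sub_add_cancel hlt.le]
  exact heq.symm

lemma exists_mem_isSourceSet_diff_singleton [Finite V] {A : V → V → Prop} {W E₁ E₂ : Set V}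
    (hE₂W : E₂ ⊆ W) (hE₂ : E₂.Nonempty) (h₁ : IsSourceSet A W E₁)
    (h₂ : IsRobustSourceSet A W E₂) :
    ∃ u ∈ E₂, IsSourceSet A (W \ {u}) (E₁ \ {u}) := by
  by_contra! hnone
  obtain ⟨e₀, he₀⟩ := hE₂
  -- `g` below sends every vertex into `E₂`, so its periodic points lie in `E₂`.
  have hsep : ∀ u, ∃ e ∈ E₂,
      u ∈ E₂ → e ≠ u ∧ ∀ t ∈ E₁ \ {u}, ¬ ReachesWithin A (W \ {u}) t e := by
    intro u
    by_cases hu : u ∈ E₂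
    · obtain ⟨v, hv, hunreach⟩ := not_forall₂.1 (hnone u hu)
      obtain ⟨e, ⟨he, heu⟩, hev⟩ := h₂ u (hE₂W hu) v hv
      exact ⟨e, he, fun _ => ⟨heu, fun t ht hte => hunreach ⟨t, ht, hte.trans hev⟩⟩⟩
    · exact ⟨e₀, he₀, fun h => absurd h hu⟩
  choose g hgE₂ hg using hsep
  have hpre : ∀ c ∈ Function.periodicPts g, ∃ p ∈ Function.periodicPts g, g p = c :=
    fun c hc => (Function.bijOn_periodicPts g).surjOn hc
  have : Nonempty V := ⟨e₀⟩
  obtain ⟨x, hx⟩ := Function.periodicPts_nonempty g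
  obtain ⟨s, hs, hsx⟩ := h₁ x (by obtain ⟨q, -, rfl⟩ := hpre x hx; exact hE₂W (hgE₂ q))
  obtain ⟨c, hc, hsC, hsc⟩ := hsx.exists_first_mem hx
  obtain ⟨p, hp, rfl⟩ := hpre c hc
  obtain ⟨hne, hsep⟩ := hg p (by obtain ⟨q, -, rfl⟩ := hpre p hp; exact hgE₂ q)
  have hpC : p ∈ Function.periodicPts g \ {g p} := ⟨hp, hne.symm⟩
  refine hsep s ⟨hs, fun hsp => hsC (by rwa [hsp])⟩ (hsc.mono fun y hy => ⟨hy.1, ?_⟩)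
  rintro rfl
  exact hy.2 hpC

def IsLowHighOrder (A : V → V → Prop) (W E₁ E₂ : Set V) (f : V → ℕ) : Prop :=
  Set.InjOn f W ∧ ∀ v ∈ W,
    (v ∈ E₁ ∨ ∃ w ∈ W, A w v ∧ f w < f v) ∧ (v ∈ E₂ ∨ ∃ w ∈ W, A w v ∧ f v < f w)

lemma IsLowHighOrder.exists_insert [Finite V] {A : V → V → Prop} {W E₁ E₂ : Set V} {u : V}
    {f : V → ℕ} (hloop : ∀ v, ¬ A v v) (hu : u ∈ E₂) (huW : u ∈ W) (h₁ : IsSourceSet A W E₁)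
    (hf : IsLowHighOrder A (W \ {u}) (E₁ \ {u}) ((E₂ ∪ {x ∈ W | A u x}) \ {u}) f) :
    ∃ g, IsLowHighOrder A W E₁ E₂ g := by
  classical
  have : Nonempty V := ⟨u⟩
  obtain ⟨m, hm⟩ := Finite.exists_max f
  obtain ⟨g, hgu, hg⟩ : ∃ g : V → ℕ, g u = f m + 1 ∧ ∀ v ≠ u, g v = f v :=
    ⟨Function.update f u (f m + 1), Function.update_self ..,
      fun _ hv => Function.update_of_ne hv ..⟩
  have hlt : ∀ v ≠ u, g v < g u := fun v hv => by
    rw [hg v hv, hgu]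
    exact Nat.lt_succ_of_le (hm v)
  refine ⟨g, ?_, fun v hv => ?_⟩
  · rw [← Set.insert_sdiff_self_of_mem huW, Set.injOn_insert (fun h => h.2 rfl)]
    refine ⟨hf.1.congr fun v hv => (hg v hv.2).symm, ?_⟩
    rintro ⟨v, hv, hvu⟩
    exact (hlt v hv.2).ne hvu
  by_cases hvu : v = u
  · subst hvu
    refine ⟨?_, .inl hu⟩
    obtain ⟨s, hs, hsv⟩ := h₁ v huW
    rcases Relation.ReflTransGen.cases_tail hsv with rfl | ⟨w, -, hwv, hwW, -⟩
    · exact .inl hs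
    · have hwv' : w ≠ v := by rintro rfl; exact hloop w hwv
      exact .inr ⟨w, hwW, hwv, hlt w hwv'⟩
  obtain ⟨hlow, hhigh⟩ := hf.2 v ⟨hv, hvu⟩
  constructor
  · rcases hlow with h | ⟨w, hw, hwv, hwlt⟩
    · exact .inl h.1
    · exact .inr ⟨w, hw.1, hwv, by rwa [hg w hw.2, hg v hvu]⟩
  · rcases hhigh with ⟨h | ⟨-, huv⟩, -⟩ | ⟨w, hw, hwv, hwlt⟩
    · exact .inl h
    · exact .inr ⟨u, huW, huv, hlt v hvu⟩
    · exact .inr ⟨w, hw.1, hwv, by rwa [hg w hw.2, hg v hvu]⟩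

theorem exists_isLowHighOrder [Finite V] {A : V → V → Prop} (hloop : ∀ v, ¬ A v v)
    {W E₁ E₂ : Set V} (hE₂W : E₂ ⊆ W) (h₁ : IsSourceSet A W E₁) (h₂ : IsSourceSet A W E₂)
    (h₂' : IsRobustSourceSet A W E₂) : ∃ f, IsLowHighOrder A W E₁ E₂ f := by
  induction hn : W.ncard using Nat.strong_induction_on generalizing W E₁ E₂ with
  | _ n ih =>
  rcases W.eq_empty_or_nonempty with rfl | ⟨v, hv⟩
  · exact ⟨0, by simp [IsLowHighOrder]⟩
  obtain ⟨s, hs, -⟩ := h₂ v hv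
  obtain ⟨u, hu, hpeel⟩ := exists_mem_isSourceSet_diff_singleton hE₂W ⟨s, hs⟩ h₁ h₂'
  have huW := hE₂W hu
  have hsub : (E₂ ∪ {x ∈ W | A u x}) \ {u} ⊆ W \ {u} :=
    Set.sdiff_subset_sdiff_left (Set.union_subset hE₂W (Set.sep_subset _ _))
  have hsrc : IsSourceSet A (W \ {u}) ((E₂ ∪ {x ∈ W | A u x}) \ {u}) := fun v hv =>
    let ⟨s, ⟨hs, hsu⟩, hsv⟩ := h₂' u huW v hv
    ⟨s, ⟨.inl hs, hsu⟩, hsv⟩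
  obtain ⟨f, hf⟩ := ih _ (hn ▸ Set.ncard_sdiff_singleton_lt_of_mem huW) hsub hpeel hsrc
    (h₂'.peel u) rfl
  exact hf.exists_insert hloop hu huW h₁

section TwoConnected

variable {A : V → V → Prop} {r : V}

lemma ReachesAvoiding.reachesWithin (hr : ∀ v, ¬ A v r) {S : Set V} {a v : V}
    (h : ReachesAvoiding A S a v) (ha : a ≠ r) : ReachesWithin A ({x | x ≠ r} \ S) a v := by
  revert ha
  induction h using Relation.ReflTransGen.head_induction_on with
  | refl => exact fun _ => .refl
  | @head a b hab _ ih =>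
    intro ha
    have hb : b ≠ r := by rintro rfl; exact hr a hab.1
    exact .head ⟨hab.1, ⟨ha, hab.2.1⟩, ⟨hb, hab.2.2⟩⟩ (ih hb)

lemma TwoConnected.isSourceSet_diff (hr : ∀ v, ¬ A v r) (h2 : TwoConnected A r) {S : Set V}
    (hS : S.ncard ≤ 1) (hrS : r ∉ S) : IsSourceSet A ({x | x ≠ r} \ S) ({x | A r x} \ S) := by
  rintro v ⟨hvr, hvS⟩
  have hreach : ReachesAvoiding A S r v := by
    by_contra h
    exact h2 S hS ⟨hrS, v, hvS, h⟩
  rcases Relation.ReflTransGen.cases_head hreach with h | ⟨c, hrc, hcv⟩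
  · exact absurd h.symm hvr
  · have hcr : c ≠ r := fun h => hr r (h ▸ hrc.1)
    exact ⟨c, ⟨hrc.1, hrc.2.2⟩, ReachesAvoiding.reachesWithin hr hcv hcr⟩

lemma TwoConnected.isSourceSet (hr : ∀ v, ¬ A v r) (h2 : TwoConnected A r) :
    IsSourceSet A {x | x ≠ r} {x | A r x} := by
  simpa using h2.isSourceSet_diff hr (S := ∅) (by simp) (by simp)

lemma TwoConnected.isRobustSourceSet (hr : ∀ v, ¬ A v r) (h2 : TwoConnected A r) :
    IsRobustSourceSet A {x | x ≠ r} {x | A r x} := fun u hu =>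
  h2.isSourceSet_diff hr (Set.ncard_singleton u).le fun h => hu h.symm

end TwoConnected

section Ascending

variable {α : Type*} [LinearOrder α] {A : V → V → Prop} {r : V} {f : V → α}

def Ascending (A : V → V → Prop) (r : V) (f : V → α) (a b : V) : Prop :=
  A a b ∧ (a = r ∨ f a < f b)

lemma acyclic_of_rank {β : Type*} [Preorder β] {B : V → V → Prop} (m : V → β)
    (hm : ∀ u v, B u v → m u < m v) : Acyclic B := by
  intro u v huv hvu
  have hcycle := Relation.TransGen.lift m hm _ _ (Relation.TransGen.head' huv hvu)
  rw [Relation.transGen_eq_self] at hcycle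
  exact lt_irrefl _ hcycle

lemma acyclic_ascending (hr : ∀ v, ¬ A v r) (f : V → α) : Acyclic (Ascending A r f) := by
  classical
  refine acyclic_of_rank (fun v => if v = r then (⊥ : WithBot α) else f v) fun a b ⟨hab, h⟩ => ?_
  have hb : b ≠ r := fun h => hr a (h ▸ hab)
  by_cases ha : a = r
  · simp [ha, hb]
  · simp [ha, hb, h.resolve_left ha]

lemma rconnected_ascending [Finite V] (h : ∀ v, v ≠ r → A r v ∨ ∃ w, A w v ∧ f w < f v) :
    RConnected (Ascending A r f) r := by
  by_contra hcon
  obtain ⟨v, hv, hmin⟩ := Set.exists_min_image {v | ¬ Reaches (Ascending A r f) r v} f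
    (Set.toFinite _) (not_forall.1 hcon)
  have hvr : v ≠ r := by rintro rfl; exact hv Relation.ReflTransGen.refl
  apply hv
  rcases h v hvr with hrv | ⟨w, hwv, hlt⟩
  · exact Relation.ReflTransGen.single ⟨hrv, .inl rfl⟩
  · have hw : Reaches (Ascending A r f) r w := by
      by_contra hw
      exact (hmin w hw).not_gt hlt
    exact Relation.ReflTransGen.tail hw ⟨hwv, .inr hlt⟩

lemma ncard_arcs_eq_ascending_add_descending [Finite V] (hloop : ∀ v, ¬ A v v)
    (hf : Set.InjOn f {x | x ≠ r}) :
    {p : V × V | A p.1 p.2 ∧ p.1 ≠ r ∧ p.2 ≠ r}.ncard =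
      {p : V × V | Ascending A r f p.1 p.2 ∧ p.1 ≠ r ∧ p.2 ≠ r}.ncard +
      {p : V × V | Ascending A r (OrderDual.toDual ∘ f) p.1 p.2 ∧ p.1 ≠ r ∧ p.2 ≠ r}.ncard := by
  rw [← Set.ncard_inter_add_ncard_sdiff_eq_ncard _ {p : V × V | f p.1 < f p.2}]
  congr 2 <;> ext ⟨a, b⟩
  · simp only [Ascending, Set.mem_inter_iff, Set.mem_ofPred_eq]
    tauto
  · simp only [Ascending, Set.mem_sdiff, Set.mem_ofPred_eq, Function.comp_apply,
      OrderDual.toDual_lt_toDual, not_lt]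
    constructor
    · rintro ⟨⟨hab, ha, hb⟩, hle⟩
      have hne : f a ≠ f b := fun h => hloop a (hf ha hb h ▸ hab)
      exact ⟨⟨hab, .inr (lt_of_le_of_ne hle hne.symm)⟩, ha, hb⟩
    · rintro ⟨⟨hab, h | hlt⟩, ha, hb⟩
      · exact absurd h ha
      · exact ⟨⟨hab, ha, hb⟩, hlt.le⟩

end Ascending

/-- Every 2-connected rooted digraph has an acyclic connected
spanning subdigraph containing at least half of the arcs of `D − r`. -/
theorem acyclic_spanning_subdigraph [Fintype V] (A : V → V → Prop) (r : V)
    (hD : IsRootedDigraph A r) (h2 : TwoConnected A r) :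
    ∃ B : V → V → Prop,
      (∀ u v, B u v → A u v) ∧ Acyclic B ∧ RConnected B r ∧
      ({p : V × V | A p.1 p.2 ∧ p.1 ≠ r ∧ p.2 ≠ r}.ncard : ℝ) / 2 ≤
        ({p : V × V | B p.1 p.2 ∧ p.1 ≠ r ∧ p.2 ≠ r}.ncard : ℝ) := by
  obtain ⟨hloop, hr, -, -⟩ := hD
  have hout : {x | A r x} ⊆ {x | x ≠ r} := fun x (hx : A r x) (hxr : x = r) => hloop r (hxr ▸ hx)
  obtain ⟨f, hinj, hf⟩ := exists_isLowHighOrder hloop hout (h2.isSourceSet hr)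
    (h2.isSourceSet hr) (h2.isRobustSourceSet hr)
  have hup : RConnected (Ascending A r f) r := rconnected_ascending fun v hv =>
    (hf v hv).1.imp id fun ⟨w, _, hwv, hlt⟩ => ⟨w, hwv, hlt⟩
  have hdown : RConnected (Ascending A r (OrderDual.toDual ∘ f)) r := rconnected_ascending
    fun v hv => (hf v hv).2.imp id fun ⟨w, _, hwv, hlt⟩ => ⟨w, hwv, hlt⟩
  have hsplit := ncard_arcs_eq_ascending_add_descending hloop hinj
  rcases le_total
    {p : V × V | Ascending A r f p.1 p.2 ∧ p.1 ≠ r ∧ p.2 ≠ r}.ncard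
    {p : V × V | Ascending A r (OrderDual.toDual ∘ f) p.1 p.2 ∧ p.1 ≠ r ∧ p.2 ≠ r}.ncard
    with hle | hle
  · refine ⟨_, fun _ _ h => h.1, acyclic_ascending hr _, hdown, ?_⟩
    rw [hsplit]; push_cast; linarith [(Nat.cast_le (α := ℝ)).2 hle]
  · refine ⟨_, fun _ _ h => h.1, acyclic_ascending hr _, hup, ?_⟩
    rw [hsplit]; push_cast; linarith [(Nat.cast_le (α := ℝ)).2 hle]
end

section
/- Every undirected graph G on n vertices and m edges has a vertex cover of size at most (n+m)/3. -/
/-!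
Induct on the number of edges, with the support of the graph in place of its vertex count
(deleting edges shrinks the support but not the vertex type). If some vertex `v` has degree at
least 2, put `v` into the cover and delete its edges: the cover grows by one, the edge count drops
by at least two and the support loses `v`. Otherwise every degree is at most 1, so the handshake
lemma gives `2 m ≤ |support|`, and any cover of size at most `m` (one endpoint per edge) will do.
-/

open Finset

namespace SimpleGraph

variable {V : Type*} {G : SimpleGraph V}

theorem IsVertexCover.insert_of_deleteIncidenceSet {v : V} {C : Set V}
    (hC : (G.deleteIncidenceSet v).IsVertexCover C) : G.IsVertexCover (insert v C) := by
  intro a b hab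
  by_cases ha : a = v
  · exact .inl (.inl ha)
  by_cases hb : b = v
  · exact .inr (.inl hb)
  exact (hC (deleteIncidenceSet_adj.mpr ⟨hab, ha, hb⟩)).imp .inr .inr

theorem ncard_support_deleteIncidenceSet_lt [Finite V] {v : V} (hv : v ∈ G.support) :
    (G.deleteIncidenceSet v).support.ncard < G.support.ncard :=
  (Set.ncard_le_ncard (G.support_deleteIncidenceSet_subset v)).trans_lt
    (Set.ncard_sdiff_singleton_lt_of_mem hv)

theorem ncard_edgeSet_deleteIncidenceSet_add_degree [Fintype V] [DecidableRel G.Adj] (v : V) :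
    (G.deleteIncidenceSet v).edgeSet.ncard + G.degree v = G.edgeSet.ncard := by
  classical
  rw [edgeSet_deleteIncidenceSet, ← card_incidenceFinset_eq_degree, ← Set.ncard_coe_finset,
    coe_incidenceFinset]
  exact Set.ncard_sdiff_add_ncard_of_subset (G.incidenceSet_subset v)

theorem two_mul_ncard_edgeSet_le_mul_ncard_support [Fintype V] [DecidableRel G.Adj] {k : ℕ}
    (h : ∀ v, G.degree v ≤ k) : 2 * G.edgeSet.ncard ≤ k * G.support.ncard := by
  classical
  calc 2 * G.edgeSet.ncard = ∑ v ∈ G.support, G.degree v := by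
        rw [sum_degrees_support_eq_twice_card_edges, ← coe_edgeFinset, Set.ncard_coe_finset]
    _ ≤ #G.support.toFinset * k := sum_le_card_nsmul _ _ _ fun v _ => h v
    _ = k * G.support.ncard := by rw [mul_comm, Set.ncard_eq_toFinset_card']

theorem exists_isVertexCover_ncard_le_ncard_edgeSet [Finite V] (G : SimpleGraph V) :
    ∃ C : Set V, G.IsVertexCover C ∧ C.ncard ≤ G.edgeSet.ncard := by
  obtain ⟨C, hC, hcover⟩ := G.vertexCoverNum_exists
  refine ⟨C, hcover, ?_⟩
  rw [Set.ncard_def, Set.ncard_def, hC]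
  exact ENat.toNat_le_toNat G.vertexCoverNum_le_encard_edgeSet
    (Set.encard_ne_top_iff.mpr G.edgeSet.toFinite)

theorem exists_isVertexCover_three_mul_ncard_le [Finite V] (G : SimpleGraph V) :
    ∃ C : Set V, G.IsVertexCover C ∧ 3 * C.ncard ≤ G.support.ncard + G.edgeSet.ncard := by
  classical
  have := Fintype.ofFinite V
  induction hm : G.edgeSet.ncard using Nat.strong_induction_on generalizing G with
  | _ m ih =>
  by_cases hΔ : ∃ v, 2 ≤ G.degree v
  · obtain ⟨v, hv⟩ := hΔ
    have hedges := ncard_edgeSet_deleteIncidenceSet_add_degree (G := G) v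
    have hsupport := ncard_support_deleteIncidenceSet_lt
      ((G.degree_eq_zero_iff_notMem_support v).not_left.mp (by omega))
    obtain ⟨C, hC, hcard⟩ := ih _ (by omega) (G.deleteIncidenceSet v) rfl
    have := Set.ncard_insert_le v C
    exact ⟨insert v C, hC.insert_of_deleteIncidenceSet, by omega⟩
  · push Not at hΔ
    obtain ⟨C, hC, hcard⟩ := G.exists_isVertexCover_ncard_le_ncard_edgeSet
    have := two_mul_ncard_edgeSet_le_mul_ncard_support fun v => Nat.le_of_lt_succ (hΔ v)
    exact ⟨C, hC, by omega⟩

end SimpleGraph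

/-- Every undirected graph on `n` vertices and `m` edges has a
vertex cover of size at most `(n + m) / 3`. -/
theorem vertex_cover_third {V : Type*} [Fintype V] (G : SimpleGraph V) :
    ∃ C : Set V, (∀ u v, G.Adj u v → u ∈ C ∨ v ∈ C) ∧
      (C.ncard : ℝ) ≤ ((Fintype.card V : ℝ) + (G.edgeSet.ncard : ℝ)) / 3 := by
  obtain ⟨C, hC, hcard⟩ := G.exists_isVertexCover_three_mul_ncard_le
  have hsupport : G.support.ncard ≤ Fintype.card V := by
    rw [← Nat.card_eq_fintype_card, ← Set.ncard_univ]
    exact Set.ncard_le_ncard (Set.subset_univ _)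
  refine ⟨C, fun _ _ huv => hC huv, ?_⟩
  rw [le_div_iff₀ three_pos]
  exact_mod_cast (by omega : C.ncard * 3 ≤ Fintype.card V + G.edgeSet.ncard)
end

section
/- Let G be a bipartite graph over vertex bipartition A ∪ B in which every vertex of A has degree exactly 2. Then there exists a subset of B dominating A of size at most (|A|+|B|)/3. -/
/-!
Each vertex `a ∈ A` gives the pair `N(a) ⊆ B`, and a set dominates `A` iff it meets every such
pair. A family `P` of sets of size at least two inside `B` has a hitting set `S ⊆ B` with
`3 |S| ≤ |B| + |P|`: if some `v` lies in two members of `P`, choose `v` and delete it together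
with the members it meets; otherwise some member `p` is disjoint from all the others, so choose
one point of `p` and delete `p` together with its points. Either way `|B| + |P|` drops by at
least three while `S` grows by one.
-/

open Finset

namespace Finset

variable {V : Type*} [DecidableEq V]

lemma exists_greedy_hitting_step {B : Finset V} {P : Finset (Finset V)}
    (hP : ∀ p ∈ P, p ⊆ B ∧ 2 ≤ #p) (hPne : P.Nonempty) :
    ∃ v, ∃ X ⊆ B, v ∈ X ∧ (∀ p ∈ P, v ∉ p → Disjoint p X) ∧
      3 ≤ #X + #{p ∈ P | v ∈ p} := by
  by_cases hdeg : ∃ v ∈ B, 2 ≤ #{p ∈ P | v ∈ p}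
  · obtain ⟨v, hvB, hv⟩ := hdeg
    refine ⟨v, {v}, singleton_subset_iff.mpr hvB, mem_singleton_self v, ?_, ?_⟩
    · intro p _ hvp
      exact disjoint_singleton_right.mpr hvp
    · rw [card_singleton]
      omega
  · push Not at hdeg
    obtain ⟨p₀, hp₀⟩ := hPne
    obtain ⟨hp₀B, hp₀card⟩ := hP p₀ hp₀
    obtain ⟨v, hv⟩ := card_pos.mp (by omega : 0 < #p₀)
    -- every point of `B` lies in at most one member, so members other than `p₀` avoid `p₀`
    have hunique : ∀ p ∈ P, ∀ w ∈ p₀, w ∈ p → p = p₀ := fun p hp w hw hwp =>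
      card_le_one.mp (Nat.le_of_lt_succ (hdeg w (hp₀B hw))) p (mem_filter.mpr ⟨hp, hwp⟩)
        p₀ (mem_filter.mpr ⟨hp₀, hw⟩)
    refine ⟨v, p₀, hp₀B, hv, ?_, ?_⟩
    · intro p hp hvp
      refine disjoint_left.mpr fun w hwp hw => hvp ?_
      rw [hunique p hp w hw hwp]
      exact hv
    · have : 0 < #{p ∈ P | v ∈ p} := card_pos.mpr ⟨p₀, mem_filter.mpr ⟨hp₀, hv⟩⟩
      omega

theorem exists_hitting_set_three_mul_card_le (B : Finset V) (P : Finset (Finset V))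
    (hP : ∀ p ∈ P, p ⊆ B ∧ 2 ≤ #p) :
    ∃ S ⊆ B, (∀ p ∈ P, ∃ x ∈ S, x ∈ p) ∧ 3 * #S ≤ #B + #P := by
  induction B using Finset.strongInduction generalizing P with
  | H B ih =>
  rcases P.eq_empty_or_nonempty with rfl | hPne
  · exact ⟨∅, empty_subset B, by simp, by simp⟩
  obtain ⟨v, X, hXB, hvX, hdisj, hcount⟩ := exists_greedy_hitting_step hP hPne
  obtain ⟨S, hSB, hShit, hScard⟩ := ih (B \ X) (sdiff_ssubset hXB ⟨v, hvX⟩)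
    {p ∈ P | v ∉ p} fun p hp => by
      obtain ⟨hp, hvp⟩ := mem_filter.mp hp
      exact ⟨subset_sdiff.mpr ⟨(hP p hp).1, hdisj p hp hvp⟩, (hP p hp).2⟩
  refine ⟨insert v S, insert_subset (hXB hvX) (hSB.trans sdiff_subset), ?_, ?_⟩
  · intro p hp
    by_cases hvp : v ∈ p
    · exact ⟨v, mem_insert_self v S, hvp⟩
    · obtain ⟨x, hxS, hxp⟩ := hShit p (mem_filter.mpr ⟨hp, hvp⟩)
      exact ⟨x, mem_insert_of_mem hxS, hxp⟩
  · have hins : #(insert v S) ≤ #S + 1 := card_insert_le v S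
    have hBX : #(B \ X) = #B - #X := card_sdiff_of_subset hXB
    have hXle : #X ≤ #B := card_le_card hXB
    have hsplit := P.card_filter_add_card_filter_not (v ∈ ·)
    omega

end Finset

theorem bipartite_dominating_set_general {V : Type*} [Fintype V] (G : SimpleGraph V)
    (A B : Set V) (hdisj : Disjoint A B)
    (hbip : ∀ u v, G.Adj u v → (u ∈ A ∧ v ∈ B) ∨ (u ∈ B ∧ v ∈ A))
    (hdeg : ∀ a ∈ A, {v | G.Adj a v}.ncard = 2) :
    ∃ S ⊆ B, (∀ a ∈ A, ∃ b ∈ S, G.Adj a b) ∧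
      (S.ncard : ℝ) ≤ ((A.ncard : ℝ) + (B.ncard : ℝ)) / 3 := by
  classical
  have hnbr : ∀ a ∈ A, G.neighborFinset a ⊆ B.toFinset ∧ 2 ≤ #(G.neighborFinset a) := by
    intro a ha
    refine ⟨fun x hx => ?_, ?_⟩
    · rcases hbip a x ((G.mem_neighborFinset a x).mp hx) with ⟨-, hxB⟩ | ⟨haB, -⟩
      · exact Set.mem_toFinset.mpr hxB
      · exact absurd haB (Set.disjoint_left.mp hdisj ha)
    · rw [← hdeg a ha, Set.ncard_eq_toFinset_card' {v | G.Adj a v}]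
      exact card_le_card fun x hx => by simpa using hx
  obtain ⟨S, hSB, hShit, hScard⟩ := exists_hitting_set_three_mul_card_le B.toFinset
    (A.toFinset.image fun a => G.neighborFinset a) (by simpa using hnbr)
  refine ⟨S, fun x hx => Set.mem_toFinset.mp (hSB hx), fun a ha => ?_, ?_⟩
  · obtain ⟨x, hxS, hxa⟩ := hShit _ (mem_image_of_mem _ (Set.mem_toFinset.mpr ha))
    exact ⟨x, hxS, (G.mem_neighborFinset a x).mp hxa⟩
  · have hA : #(A.toFinset.image fun a => G.neighborFinset a) ≤ A.ncard :=
      (Set.ncard_eq_toFinset_card' A).symm ▸ card_image_le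
    have hS : 3 * (S : Set V).ncard ≤ A.ncard + B.ncard := by
      rw [Set.ncard_coe_finset, Set.ncard_eq_toFinset_card' B]
      omega
    have hSℝ : (3 : ℝ) * (S : Set V).ncard ≤ A.ncard + B.ncard := by exact_mod_cast hS
    linarith

/-- In a bipartite graph over `A ∪ B` in which every vertex of
`A` has degree exactly 2, some subset of `B` of size at most `(|A| + |B|) / 3`
dominates `A`. -/
theorem bipartite_dominating_set {V : Type*} [Fintype V] (G : SimpleGraph V)
    (A B : Set V) (hdisj : Disjoint A B) (hcover : A ∪ B = Set.univ)
    (hbip : ∀ u v, G.Adj u v → (u ∈ A ∧ v ∈ B) ∨ (u ∈ B ∧ v ∈ A))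
    (hdeg : ∀ a ∈ A, {v | G.Adj a v}.ncard = 2) :
    ∃ S ⊆ B, (∀ a ∈ A, ∃ b ∈ S, G.Adj a b) ∧
      (S.ncard : ℝ) ≤ ((A.ncard : ℝ) + (B.ncard : ℝ)) / 3 :=
  bipartite_dominating_set_general G A B hdisj hbip hdeg
end

section
/- Let D be a connected acyclic rooted digraph with l vertices of indegree at least 2 and whose root r has outdegree d(r) ≥ 2. Then D has an outbranching with at least (l + d(r) − 1)/3 + 1 leaves. -/
variable {V : Type*}

/-
Among all maps `p` sending each non-root vertex to one of its in-neighbours, pick one whose tree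
(an outbranching, as `D` is acyclic) has the most leaves `L`; write `c v` for the number of
children of `v`. A vertex `z` of indegree at least 2 has an in-neighbour `u ≠ p z`. If `z` is the
only child of `p z`, maximality forces `u` to be a leaf (otherwise re-hanging `z` below `u` gains
the leaf `p z`), and distinct such `z` get distinct `u`; so there are at most `|L|` of them. Every
other such `z` hangs below a non-root vertex with at least two children, so there are at most
`2 ∑_{v ≠ r} (c v - 1) = 2 (|L| - c r)` of them. Since every outneighbour of `r` is a child of `r`,
this gives `l + 2 d(r) ≤ 3 |L|`.
-/

open Finset Function

theorem Acyclic.wellFounded_transGen [Finite V] {A : V → V → Prop} (hacy : Acyclic A) :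
    WellFounded (Relation.TransGen A) :=
  haveI : Std.Irrefl (Relation.TransGen A) := ⟨fun v hv => by
    obtain ⟨w, hvw, hwv⟩ := Relation.TransGen.head'_iff.1 hv
    exact hacy v w hvw hwv⟩
  Finite.wellFounded_of_trans_of_irrefl _

def IsParentMap (A : V → V → Prop) (r : V) (p : V → V) : Prop :=
  ∀ v, v ≠ r → A (p v) v

def parentTree (r : V) (p : V → V) : V → V → Prop :=
  fun u v => v ≠ r ∧ p v = u

theorem RConnected.exists_isParentMap {A : V → V → Prop} {r : V} (hconn : RConnected A r) :
    ∃ p, IsParentMap A r p := by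
  have : ∀ v, ∃ u, v ≠ r → A u v := fun v => by
    rcases (hconn v).cases_tail with rfl | ⟨u, -, hu⟩
    · exact ⟨v, fun h => (h rfl).elim⟩
    · exact ⟨u, fun _ => hu⟩
  choose p hp using this
  exact ⟨p, hp⟩

theorem IsParentMap.update [DecidableEq V] {A : V → V → Prop} {r : V} {p : V → V}
    (hp : IsParentMap A r p) {z u : V} (hA : A u z) : IsParentMap A r (update p z u) := by
  intro v hv
  rcases eq_or_ne v z with rfl | hvz
  · simpa using hA
  · rw [update_of_ne hvz]
    exact hp v hv

theorem IsParentMap.isOutbranching [Finite V] {A : V → V → Prop} {r : V} {p : V → V}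
    (hp : IsParentMap A r p) (hacy : Acyclic A) : IsOutbranching A r (parentTree r p) := by
  refine ⟨fun u v ⟨hv, hpv⟩ => hpv ▸ hp v hv, fun v hv => ⟨p v, ⟨hv, rfl⟩, fun u hu => hu.2.symm⟩,
    fun u hu => hu.1 rfl, fun v => ?_⟩
  induction v using hacy.wellFounded_transGen.induction with
  | _ v ih =>
    by_cases hv : v = r
    · exact hv ▸ Relation.ReflTransGen.refl
    · exact (ih (p v) (.single (hp v hv))).tail ⟨hv, rfl⟩

namespace IsRootedDigraph

variable {A : V → V → Prop} {r : V}

theorem ne_root_of_two_le_indeg (hD : IsRootedDigraph A r) {z : V} (hz : 2 ≤ indeg A z) :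
    z ≠ r := by
  obtain ⟨-, hr, -⟩ := hD
  rintro rfl
  simp [indeg, hr] at hz

theorem apply_ne_root_of_two_le_indeg (hD : IsRootedDigraph A r) {p : V → V}
    (hp : IsParentMap A r p) {z : V} (hz : 2 ≤ indeg A z) : p z ≠ r := by
  intro hpz
  obtain ⟨u, hu, hur⟩ := Set.exists_ne_of_one_lt_ncard hz r
  exact hD.2.2.2 u z hur (hpz ▸ hp z (hD.ne_root_of_two_le_indeg hz)) hu

end IsRootedDigraph

section ParentMap

variable [Fintype V] [DecidableEq V] {A : V → V → Prop} {r : V} {p : V → V}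

def children (r : V) (p : V → V) (v : V) : Finset V :=
  {u ∈ univ.erase r | p u = v}

def leaves (r : V) (p : V → V) : Finset V :=
  {v | children r p v = ∅}

@[simp]
theorem mem_children {v u : V} : u ∈ children r p v ↔ u ≠ r ∧ p u = v := by
  simp [children]

theorem self_mem_children_apply {z : V} (hz : z ≠ r) : z ∈ children r p (p z) :=
  mem_children.2 ⟨hz, rfl⟩

theorem mem_leaves {v : V} : v ∈ leaves r p ↔ ∀ u, u ≠ r → p u ≠ v := by
  simp [leaves, Finset.eq_empty_iff_forall_notMem]

theorem apply_notMem_leaves {z : V} (hz : z ≠ r) : p z ∉ leaves r p :=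
  fun h => mem_leaves.1 h z hz rfl

theorem leafCount_parentTree : leafCount (parentTree r p) = #(leaves r p) := by
  rw [leafCount, ← Set.ncard_coe_finset]
  congr 1
  ext v
  simp [parentTree, mem_leaves]

-- Truncated subtraction: a leaf contributes `0`, not `-1`.
theorem sum_card_children_sub_one_add_one (r : V) (p : V → V) :
    ∑ v, (#(children r p v) - 1) + 1 = #(leaves r p) := by
  have hedges : ∑ v, #(children r p v) + 1 = Fintype.card V := by
    unfold children
    rw [← card_eq_sum_card_fiberwise (fun _ _ => mem_univ _), card_erase_add_one (mem_univ r),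
      card_univ]
  have hinner : ∑ v, (#(children r p v) - 1) + #{v | ¬children r p v = ∅} =
      ∑ v, #(children r p v) := by
    rw [card_filter, ← sum_add_distrib]
    refine sum_congr rfl fun v _ => ?_
    split_ifs with h
    · simp [h]
    · have := card_pos.2 (nonempty_iff_ne_empty.2 h)
      omega
  have hsplit := card_filter_add_card_filter_not (s := univ) (fun v => children r p v = ∅)
  rw [card_univ] at hsplit
  change #(leaves r p) + _ = _ at hsplit
  omega

theorem children_update_of_ne {z u v : V} (hvu : v ≠ u) (hvz : v ≠ p z) :
    children r (update p z u) v = children r p v := by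
  ext w
  rcases eq_or_ne w z with rfl | hwz
  · simp [Ne.symm hvu, Ne.symm hvz]
  · simp [update_of_ne hwz]

theorem leaves_update_of_children_eq_singleton {z u : V} (hz : z ≠ r)
    (hsole : children r p (p z) = {z}) (hu : u ≠ p z) :
    leaves r (update p z u) = insert (p z) ((leaves r p).erase u) := by
  have hsole' : ∀ w, w ≠ r → p w = p z → w = z := fun w hw hpw =>
    mem_singleton.1 (hsole ▸ mem_children.2 ⟨hw, hpw⟩)
  ext v
  simp only [mem_insert, mem_erase, mem_leaves]
  constructor
  · intro hv
    refine or_iff_not_imp_left.2 fun hvz => ⟨fun hvu => hv z hz (by simp [hvu]), fun w hw => ?_⟩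
    rcases eq_or_ne w z with rfl | hwz
    · exact Ne.symm hvz
    · simpa [update_of_ne hwz] using hv w hw
  · rintro (rfl | ⟨hvu, hv⟩) w hw <;> rcases eq_or_ne w z with rfl | hwz
    · simpa using hu
    · simpa [update_of_ne hwz] using fun h => hwz (hsole' w hw h)
    · simpa using Ne.symm hvu
    · simpa [update_of_ne hwz] using hv w hw

theorem card_leaves_update_of_children_eq_singleton {z u : V} (hz : z ≠ r)
    (hsole : children r p (p z) = {z}) (hu : u ≠ p z) :
    #(leaves r (update p z u)) = #((leaves r p).erase u) + 1 := by
  rw [leaves_update_of_children_eq_singleton hz hsole hu, card_insert_of_notMem]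
  exact fun h => apply_notMem_leaves hz (mem_of_mem_erase h)

theorem card_le_two_mul_sum_card_children_sub_one {Z : Finset V}
    (hZ : ∀ z ∈ Z, z ≠ r ∧ p z ≠ r ∧ children r p (p z) ≠ {z}) :
    #Z ≤ 2 * ∑ v ∈ univ.erase r, (#(children r p v) - 1) := by
  rw [card_eq_sum_card_fiberwise (f := p) (t := univ.erase r)
    fun z hz => mem_erase.2 ⟨(hZ z hz).2.1, mem_univ _⟩, mul_sum]
  refine sum_le_sum fun v _ => ?_
  rcases {z ∈ Z | p z = v}.eq_empty_or_nonempty with h | ⟨z, hz⟩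
  · simp [h]
  obtain ⟨hzZ, rfl⟩ := mem_filter.1 hz
  obtain ⟨hzr, -, hsole⟩ := hZ z hzZ
  have hfiber : #{w ∈ Z | p w = p z} ≤ #(children r p (p z)) :=
    card_le_card fun w hw => mem_children.2 ⟨(hZ w (mem_filter.1 hw).1).1, (mem_filter.1 hw).2⟩
  have htwo : 2 ≤ #(children r p (p z)) := by
    by_contra! h
    exact hsole (eq_singleton_iff_unique_mem.2 ⟨self_mem_children_apply hzr,
      fun w hw => card_le_one.1 (by omega) w hw z (self_mem_children_apply hzr)⟩)
  omega

def IsMaxLeafParentMap (A : V → V → Prop) (r : V) (p : V → V) : Prop :=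
  IsParentMap A r p ∧ ∀ q, IsParentMap A r q → #(leaves r q) ≤ #(leaves r p)

theorem exists_isMaxLeafParentMap (h : ∃ p, IsParentMap A r p) :
    ∃ p, IsMaxLeafParentMap A r p := by
  obtain ⟨p₀, hp₀⟩ := h
  have : Nonempty {p // IsParentMap A r p} := ⟨⟨p₀, hp₀⟩⟩
  obtain ⟨⟨p, hp⟩, hmax⟩ := Finite.exists_max fun q : {p // IsParentMap A r p} => #(leaves r q.1)
  exact ⟨p, hp, fun q hq => hmax ⟨q, hq⟩⟩

namespace IsMaxLeafParentMap

theorem mem_leaves_of_children_eq_singleton (hmax : IsMaxLeafParentMap A r p) {z u : V}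
    (hz : z ≠ r) (hsole : children r p (p z) = {z}) (hA : A u z) (hu : u ≠ p z) :
    u ∈ leaves r p := by
  by_contra hL
  have := hmax.2 _ (hmax.1.update hA)
  rw [card_leaves_update_of_children_eq_singleton hz hsole hu, erase_eq_of_notMem hL] at this
  omega

/-- Moving two sole children `z₁ ≠ z₂` under a common in-neighbour `u` creates two leaves and
destroys at most one. -/
theorem eq_of_children_eq_singleton (hmax : IsMaxLeafParentMap A r p) {z₁ z₂ u : V}
    (hz₁ : z₁ ≠ r) (hz₂ : z₂ ≠ r)
    (hsole₁ : children r p (p z₁) = {z₁}) (hsole₂ : children r p (p z₂) = {z₂})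
    (hA₁ : A u z₁) (hA₂ : A u z₂) (hu₁ : u ≠ p z₁) (hu₂ : u ≠ p z₂) : z₁ = z₂ := by
  by_contra h12
  have hparents : p z₂ ≠ p z₁ := fun h =>
    h12 (mem_singleton.1 (hsole₁ ▸ h ▸ self_mem_children_apply hz₂)).symm
  set p₁ := update p z₁ u
  have hp₁z₂ : p₁ z₂ = p z₂ := update_of_ne (Ne.symm h12) _ _
  have hsole₂' : children r p₁ (p₁ z₂) = {z₂} := by
    rw [hp₁z₂, children_update_of_ne (Ne.symm hu₂) hparents, hsole₂]
  have hu : u ∉ leaves r p₁ := by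
    simpa [p₁] using apply_notMem_leaves (p := p₁) hz₁
  have h₁ : #(leaves r p₁) = _ := card_leaves_update_of_children_eq_singleton hz₁ hsole₁ hu₁
  have h₂ := card_leaves_update_of_children_eq_singleton hz₂ hsole₂' (hp₁z₂ ▸ hu₂)
  rw [erase_eq_of_notMem hu] at h₂
  have hle : #(leaves r (update p₁ z₂ u)) ≤ #(leaves r p) :=
    hmax.2 _ ((hmax.1.update hA₁).update hA₂)
  have := pred_card_le_card_erase (s := leaves r p) (a := u)
  omega

theorem card_le_card_leaves (hmax : IsMaxLeafParentMap A r p) {Z : Finset V}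
    (hZ : ∀ z ∈ Z, z ≠ r ∧ children r p (p z) = {z} ∧ ∃ u, A u z ∧ u ≠ p z) :
    #Z ≤ #(leaves r p) := by
  choose! f hfA hfne using fun z hz => (hZ z hz).2.2
  refine card_le_card_of_injOn f (fun z hz => ?_) fun z₁ hz₁ z₂ hz₂ h => ?_
  · exact hmax.mem_leaves_of_children_eq_singleton (hZ z hz).1 (hZ z hz).2.1 (hfA z hz)
      (hfne z hz)
  · exact hmax.eq_of_children_eq_singleton (hZ z₁ hz₁).1 (hZ z₂ hz₂).1 (hZ z₁ hz₁).2.1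
      (hZ z₂ hz₂).2.1 (hfA z₁ hz₁) (h ▸ hfA z₂ hz₂) (hfne z₁ hz₁) (h ▸ hfne z₂ hz₂)

theorem card_add_two_mul_card_children_root_le (hmax : IsMaxLeafParentMap A r p) {Z : Finset V}
    (hZ : ∀ z ∈ Z, z ≠ r ∧ p z ≠ r ∧ ∃ u, A u z ∧ u ≠ p z) :
    #Z + 2 * #(children r p r) ≤ 3 * #(leaves r p) := by
  have hsole := hmax.card_le_card_leaves (Z := {z ∈ Z | children r p (p z) = {z}})
    fun z hz => ⟨(hZ z (mem_filter.1 hz).1).1, (mem_filter.1 hz).2, (hZ z (mem_filter.1 hz).1).2.2⟩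
  have hshared := card_le_two_mul_sum_card_children_sub_one
    (Z := {z ∈ Z | ¬children r p (p z) = {z}}) fun z hz =>
      ⟨(hZ z (mem_filter.1 hz).1).1, (hZ z (mem_filter.1 hz).1).2.1, (mem_filter.1 hz).2⟩
  have hsplit := card_filter_add_card_filter_not (s := Z) fun z => children r p (p z) = {z}
  have hcount := sum_card_children_sub_one_add_one r p
  rw [← add_sum_erase _ _ (mem_univ r)] at hcount
  omega

end IsMaxLeafParentMap

theorem IsRootedDigraph.outdeg_root_le_card_children (hD : IsRootedDigraph A r)
    (hp : IsParentMap A r p) :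
    outdeg A r ≤ #(children r p r) := by
  obtain ⟨-, hr, -, hroot⟩ := hD
  rw [outdeg, ← Set.ncard_coe_finset]
  refine Set.ncard_le_ncard fun u hu => ?_
  have hur : u ≠ r := by
    rintro rfl
    exact hr _ hu
  exact mem_children.2 ⟨hur, by_contra fun h => hroot _ _ h hu (hp u hur)⟩

end ParentMap

/-- A connected acyclic rooted digraph with `l` vertices of
indegree at least 2 and root of outdegree `d ≥ 2` has an outbranching with at
least `(l + d − 1)/3 + 1` leaves. -/
theorem acyclic_outbranching_many_leaves [Fintype V] (A : V → V → Prop) (r : V)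
    (hD : IsRootedDigraph A r) (hconn : RConnected A r) (hacy : Acyclic A)
    (hd : 2 ≤ outdeg A r) :
    ∃ T : V → V → Prop, IsOutbranching A r T ∧
      (({v | 2 ≤ indeg A v}.ncard : ℝ) + (outdeg A r : ℝ) - 1) / 3 + 1 ≤
        (leafCount T : ℝ) := by
  classical
  obtain ⟨p, hmax⟩ := exists_isMaxLeafParentMap hconn.exists_isParentMap
  refine ⟨parentTree r p, hmax.1.isOutbranching hacy, ?_⟩
  have hcount : {v | 2 ≤ indeg A v}.ncard + 2 * outdeg A r ≤ 3 * leafCount (parentTree r p) := by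
    rw [leafCount_parentTree, Set.ncard_eq_toFinset_card']
    calc _ ≤ #{v | 2 ≤ indeg A v}.toFinset + 2 * #(children r p r) := by
          gcongr
          exact hD.outdeg_root_le_card_children hmax.1
      _ ≤ 3 * #(leaves r p) := hmax.card_add_two_mul_card_children_root_le fun z hz => by
          rw [Set.mem_toFinset] at hz
          exact ⟨hD.ne_root_of_two_le_indeg hz, hD.apply_ne_root_of_two_le_indeg hmax.1 hz,
            Set.exists_ne_of_one_lt_ncard hz (p z)⟩
  have hcount' : ({v | 2 ≤ indeg A v}.ncard : ℝ) + 2 * outdeg A r ≤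
      3 * leafCount (parentTree r p) := by exact_mod_cast hcount
  have hd' : (2 : ℝ) ≤ outdeg A r := by exact_mod_cast hd
  linarith
end

section
/- Let D be a connected rooted digraph and let x be a cutvertex of D. Let D' be the rooted digraph obtained from D by deleting x and adding an arc (v,z) for every in-neighbour v of x and every outneighbour z of x with z ≠ v. Then maxleaf(D) = maxleaf(D'). -/
variable {V : Type*}

/-- auxiliary: reachability by a path with exactly `n` arcs. -/
def reachN (A : V → V → Prop) : ℕ → V → V → Prop
  | 0, u, v => u = v
  | n + 1, u, v => ∃ w, reachN A n u w ∧ A w v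

theorem reaches_iff_reachN {A : V → V → Prop} {u v : V} :
    Reaches A u v ↔ ∃ n, reachN A n u v := by
  constructor
  · intro h
    induction h with
    | refl => exact ⟨0, rfl⟩
    | tail _ hab ih => obtain ⟨n, hn⟩ := ih; exact ⟨n + 1, _, hn, hab⟩
  · rintro ⟨n, hn⟩
    induction n generalizing v with
    | zero => cases hn; exact Relation.ReflTransGen.refl
    | succ n ih => obtain ⟨w, hw, ha⟩ := hn; exact (ih hw).tail ha

/-- auxiliary distance from `r`. -/
noncomputable def distR (T : V → V → Prop) (r v : V) : ℕ :=
  sInf {n | reachN T n r v}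

theorem distR_mem {T : V → V → Prop} {r v : V} (h : Reaches T r v) :
    reachN T (distR T r v) r v :=
  Nat.sInf_mem (reaches_iff_reachN.1 h)

theorem parent_lt {A T : V → V → Prop} {r : V} (hT : IsOutbranching A r T)
    {u v : V} (huv : T u v) : distR T r u < distR T r v := by
  have hvr : v ≠ r := fun h => hT.2.2.1 u (h ▸ huv)
  have hm := distR_mem (hT.2.2.2 v)
  rcases hd : distR T r v with _ | m
  · rw [hd] at hm; exact absurd hm.symm hvr
  · rw [hd] at hm
    obtain ⟨w, hw, hwv⟩ := hm
    obtain ⟨p, _, hp⟩ := hT.2.1 v hvr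
    have : w = u := (hp w hwv).trans (hp u huv).symm
    subst this
    exact lt_of_le_of_lt (Nat.sInf_le hw) (by omega)

theorem no_two_cycle {A T : V → V → Prop} {r : V} (hT : IsOutbranching A r T)
    {u v : V} (huv : T u v) (hvu : T v u) : False :=
  lt_asymm (parent_lt hT huv) (parent_lt hT hvu)

theorem exists_outbranching (A : V → V → Prop) (r : V) (hconn : ∀ v, Reaches A r v) :
    ∃ T, IsOutbranching A r T := by
  classical
  have hpar : ∀ v, v ≠ r → ∃ u, A u v ∧ distR A r u < distR A r v := by
    intro v hv
    have hm := distR_mem (hconn v)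
    rcases hd : distR A r v with _ | m
    · rw [hd] at hm; exact absurd hm.symm hv
    · rw [hd] at hm
      obtain ⟨w, hw, hwv⟩ := hm
      exact ⟨w, hwv, lt_of_le_of_lt (Nat.sInf_le hw) (by omega)⟩
  refine ⟨fun u v => ∃ h : v ≠ r, u = Classical.choose (hpar v h), ?_, ?_, ?_, ?_⟩
  · rintro u v ⟨h, rfl⟩; exact (Classical.choose_spec (hpar v h)).1
  · intro v hv
    exact ⟨Classical.choose (hpar v hv), ⟨hv, rfl⟩, by rintro u ⟨h', rfl⟩; rfl⟩
  · rintro u ⟨h, _⟩; exact h rfl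
  · have key : ∀ n v, distR A r v = n → Reaches A r v ∧
        Relation.ReflTransGen (fun u v => ∃ h : v ≠ r, u = Classical.choose (hpar v h)) r v := by
      intro n
      induction n using Nat.strong_induction_on with
      | _ n ih =>
        intro v hv
        by_cases hvr : v = r
        · subst hvr; exact ⟨Relation.ReflTransGen.refl, Relation.ReflTransGen.refl⟩
        · have spec := Classical.choose_spec (hpar v hvr)
          have h2 := lt_of_lt_of_eq spec.2 hv
          have := ih _ h2 _ rfl
          exact ⟨this.1.tail spec.1, this.2.tail ⟨hvr, rfl⟩⟩
    intro v
    exact (key _ v rfl).2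

theorem avoid_of_leaf {A T : V → V → Prop} {x z : V}
    (hTA : ∀ u v, T u v → A u v) (hleaf : ∀ u, ¬ T x u) (hz : z ≠ x)
    {a : V} (h : Reaches T a z) : a ≠ x → ReachesAvoiding A {x} a z := by
  induction h using Relation.ReflTransGen.head_induction_on with
  | refl => intro _; exact Relation.ReflTransGen.refl
  | head hac hcz ih =>
    rename_i a' c
    intro ha
    have hcx : c ≠ x := by
      rintro rfl
      rcases hcz.cases_head with rfl | ⟨w, hw, _⟩
      · exact hz rfl
      · exact hleaf w hw
    exact Relation.ReflTransGen.head
      ⟨hTA _ _ hac, by simpa using ha, by simpa using hcx⟩ (ih hcx)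

theorem cut_child {A T : V → V → Prop} {r x : V} (hT : IsOutbranching A r T)
    (hr : r ≠ x) (hcut2 : ∃ z, z ≠ x ∧ ¬ ReachesAvoiding A {x} r z) : ∃ c, T x c := by
  by_contra h
  push_neg at h
  obtain ⟨z, hz, hnz⟩ := hcut2
  exact hnz (avoid_of_leaf hT.1 h hz (hT.2.2.2 z) hr)

theorem construct_forward [Finite V] {A : V → V → Prop} {r x : V} (hrx : r ≠ x)
    (hcut2 : ∃ z, z ≠ x ∧ ¬ ReachesAvoiding A {x} r z)
    {T : V → V → Prop} (hT : IsOutbranching A r T) :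
    ∃ T' : {w : V // w ≠ x} → {w : V // w ≠ x} → Prop,
      IsOutbranching (fun u v => A u.1 v.1 ∨ (u.1 ≠ v.1 ∧ A u.1 x ∧ A x v.1))
        ⟨r, hrx⟩ T' ∧ leafCount T ≤ leafCount T' := by
  classical
  have hxr : x ≠ r := fun h => hrx h.symm
  obtain ⟨p, hp, hpu⟩ := hT.2.1 x hxr
  have hpx : p ≠ x := by
    intro h; subst h; exact lt_irrefl _ (parent_lt hT hp)
  refine ⟨fun u v => T u.1 v.1 ∨ (T u.1 x ∧ T x v.1), ⟨?_, ?_, ?_, ?_⟩, ?_⟩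
  · rintro u v (h | ⟨h1, h2⟩)
    · exact Or.inl (hT.1 _ _ h)
    · refine Or.inr ⟨?_, hT.1 _ _ h1, hT.1 _ _ h2⟩
      intro he
      have h3 : T x u.1 := by rw [he]; exact h2
      exact no_two_cycle hT h1 h3
  · intro v hv
    have hvr : v.1 ≠ r := fun h => hv (Subtype.ext h)
    obtain ⟨u, hu, huu⟩ := hT.2.1 v.1 hvr
    by_cases hux : u = x
    · subst hux
      refine ⟨⟨p, hpx⟩, Or.inr ⟨hp, hu⟩, ?_⟩
      rintro w (h | ⟨h1, _⟩)
      · exact absurd (huu _ h) w.2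
      · exact Subtype.ext (hpu _ h1)
    · refine ⟨⟨u, hux⟩, Or.inl hu, ?_⟩
      rintro w (h | ⟨_, h2⟩)
      · exact Subtype.ext (huu _ h)
      · exact absurd (huu _ h2).symm hux
  · rintro u (h | ⟨_, h2⟩)
    · exact hT.2.2.1 _ h
    · exact hT.2.2.1 _ h2
  · have key : ∀ n (v : {w : V // w ≠ x}), distR T r v.1 = n →
        Reaches (fun u v : {w : V // w ≠ x} => T u.1 v.1 ∨ (T u.1 x ∧ T x v.1)) ⟨r, hrx⟩ v := by
      intro n
      induction n using Nat.strong_induction_on with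
      | _ n ih =>
        intro v hv
        by_cases hvr : v.1 = r
        · have : v = ⟨r, hrx⟩ := Subtype.ext hvr
          rw [this]; exact Relation.ReflTransGen.refl
        · obtain ⟨u, hu, _⟩ := hT.2.1 v.1 hvr
          by_cases hux : u = x
          · subst hux
            have h1 : distR T r p < n :=
              lt_of_lt_of_eq (lt_trans (parent_lt hT hp) (parent_lt hT hu)) hv
            exact (ih _ h1 ⟨p, hpx⟩ rfl).tail (Or.inr ⟨hp, hu⟩)
          · have h1 : distR T r u < n := lt_of_lt_of_eq (parent_lt hT hu) hv
            exact (ih _ h1 ⟨u, hux⟩ rfl).tail (Or.inl hu)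
    intro v; exact key _ v rfl
  · obtain ⟨c, hc⟩ := cut_child hT hrx hcut2
    refine Set.ncard_le_ncard_of_injOn
      (fun v => if h : v = x then (⟨r, hrx⟩ : {w : V // w ≠ x}) else ⟨v, h⟩) ?_ ?_
      (Set.toFinite _)
    · intro v hv
      have hvx : v ≠ x := by rintro rfl; exact hv c hc
      simp only [Set.mem_setOf_eq, dif_neg hvx]
      rintro u (h | ⟨h1, _⟩)
      · exact hv _ h
      · exact hv _ h1
    · intro a ha b hb h
      have hax : a ≠ x := by rintro rfl; exact ha c hc
      have hbx : b ≠ x := by rintro rfl; exact hb c hc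
      simp only [dif_neg hax, dif_neg hbx] at h
      exact congrArg Subtype.val h

theorem construct_backward [Finite V] {A : V → V → Prop} {r x : V}
    (hloop : ∀ v, ¬ A v v) (hrx : r ≠ x) (hconn : ∀ v, Reaches A r v)
    {T' : {w : V // w ≠ x} → {w : V // w ≠ x} → Prop}
    (hT' : IsOutbranching (fun u v => A u.1 v.1 ∨ (u.1 ≠ v.1 ∧ A u.1 x ∧ A x v.1))
      ⟨r, hrx⟩ T') :
    ∃ T : V → V → Prop, IsOutbranching A r T ∧ leafCount T' ≤ leafCount T := by
  classical
  by_cases hvirt : ∃ u v, T' u v ∧ ¬ A u.1 v.1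
  · set S : Set ℕ := {n | ∃ u v, T' u v ∧ ¬ A u.1 v.1 ∧ distR T' ⟨r, hrx⟩ u = n} with hSdef
    have hSne : S.Nonempty := by
      obtain ⟨a, b, h1, h2⟩ := hvirt
      exact ⟨_, a, b, h1, h2, rfl⟩
    obtain ⟨u0, v0, h01, h02, h03⟩ := Nat.sInf_mem hSne
    have hmin : ∀ (u v : {w : V // w ≠ x}), T' u v → ¬ A u.1 v.1 →
        sInf S ≤ distR T' ⟨r, hrx⟩ u := fun u v h1 h2 => Nat.sInf_le ⟨u, v, h1, h2, rfl⟩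
    have hu0x : A u0.1 x ∧ A x v0.1 := by
      rcases hT'.1 _ _ h01 with h | ⟨_, h1, h2⟩
      · exact absurd h h02
      · exact ⟨h1, h2⟩
    refine ⟨fun a b =>
      (∃ (ha : a ≠ x) (hb : b ≠ x), T' ⟨a, ha⟩ ⟨b, hb⟩ ∧ A a b) ∨
      (a = x ∧ ∃ hb : b ≠ x, ∃ u, T' u ⟨b, hb⟩ ∧ ¬ A u.1 b) ∨
      (b = x ∧ a = u0.1), ⟨?_, ?_, ?_, ?_⟩, ?_⟩
    · rintro a b (⟨ha, hb, h1, h2⟩ | ⟨rfl, hb, u, h1, h2⟩ | ⟨rfl, rfl⟩)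
      · exact h2
      · rcases hT'.1 _ _ h1 with h | ⟨_, _, h⟩
        · exact absurd h h2
        · exact h
      · exact hu0x.1
    · intro b hbr
      by_cases hbx : b = x
      · subst hbx
        refine ⟨u0.1, Or.inr (Or.inr ⟨rfl, rfl⟩), ?_⟩
        rintro a (⟨_, hb, _⟩ | ⟨_, hb, _⟩ | ⟨_, h2⟩)
        · exact absurd rfl hb
        · exact absurd rfl hb
        · exact h2
      · obtain ⟨u, hu, huu⟩ := hT'.2.1 ⟨b, hbx⟩ (fun h => hbr (congrArg Subtype.val h))
        by_cases hA : A u.1 b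
        · refine ⟨u.1, Or.inl ⟨u.2, hbx, hu, hA⟩, ?_⟩
          rintro a (⟨ha, hb', h1, h2⟩ | ⟨rfl, hb', u', h1, h2⟩ | ⟨h1, _⟩)
          · exact congrArg Subtype.val (huu ⟨a, ha⟩ h1)
          · have he := huu u' h1
            rw [he] at h2
            exact absurd hA h2
          · exact absurd h1 hbx
        · refine ⟨x, Or.inr (Or.inl ⟨rfl, hbx, u, hu, hA⟩), ?_⟩
          rintro a (⟨ha, hb', h1, h2⟩ | ⟨rfl, _⟩ | ⟨h1, _⟩)
          · have he : a = u.1 := congrArg Subtype.val (huu ⟨a, ha⟩ h1)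
            rw [he] at h2
            exact absurd h2 hA
          · rfl
          · exact absurd h1 hbx
    · rintro a (⟨ha, hb, h1, _⟩ | ⟨rfl, hb, u, h1, _⟩ | ⟨h1, _⟩)
      · exact hT'.2.2.1 ⟨a, ha⟩ h1
      · exact hT'.2.2.1 u h1
      · exact hrx h1
    · have key : ∀ n (b : V) (hb : b ≠ x), distR T' ⟨r, hrx⟩ ⟨b, hb⟩ = n →
          Reaches (fun a b =>
            (∃ (ha : a ≠ x) (hb : b ≠ x), T' ⟨a, ha⟩ ⟨b, hb⟩ ∧ A a b) ∨
            (a = x ∧ ∃ hb : b ≠ x, ∃ u, T' u ⟨b, hb⟩ ∧ ¬ A u.1 b) ∨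
            (b = x ∧ a = u0.1)) r b := by
        intro n
        induction n using Nat.strong_induction_on with
        | _ n ih =>
          intro b hb hd
          by_cases hbr : b = r
          · subst hbr; exact Relation.ReflTransGen.refl
          · obtain ⟨u, hu, _⟩ := hT'.2.1 ⟨b, hb⟩ (fun h => hbr (congrArg Subtype.val h))
            have hdu : distR T' ⟨r, hrx⟩ u < n := lt_of_lt_of_eq (parent_lt hT' hu) hd
            by_cases hA : A u.1 b
            · exact (ih _ hdu u.1 u.2 rfl).tail (Or.inl ⟨u.2, hb, hu, hA⟩)
            · have h0n : sInf S < n := lt_of_le_of_lt (hmin u ⟨b, hb⟩ hu hA) hdu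
              have hx1 := ih _ h0n u0.1 u0.2 h03
              exact (hx1.tail (Or.inr (Or.inr ⟨rfl, rfl⟩))).tail
                (Or.inr (Or.inl ⟨rfl, hb, u, hu, hA⟩))
      intro b
      by_cases hbx : b = x
      · subst hbx
        exact (key _ u0.1 u0.2 rfl).tail (Or.inr (Or.inr ⟨rfl, rfl⟩))
      · exact key _ b hbx rfl
    · refine Set.ncard_le_ncard_of_injOn Subtype.val ?_
        (Subtype.val_injective.injOn) (Set.toFinite _)
      intro v hv u hTu
      rcases hTu with ⟨ha, hb, h1, _⟩ | ⟨h1, _⟩ | ⟨_, h2⟩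
      · exact hv ⟨u, hb⟩ h1
      · exact v.2 h1
      · have hvu : v = u0 := Subtype.ext h2
        rw [hvu] at hv
        exact hv v0 h01
  · push_neg at hvirt
    rcases (hconn x).cases_tail with h | ⟨c, _, hcx⟩
    · exact absurd h.symm hrx
    · have hcxne : c ≠ x := fun h => hloop x (h ▸ hcx)
      refine ⟨fun a b =>
        (∃ (ha : a ≠ x) (hb : b ≠ x), T' ⟨a, ha⟩ ⟨b, hb⟩) ∨ (b = x ∧ a = c),
        ⟨?_, ?_, ?_, ?_⟩, ?_⟩
      · rintro a b (⟨ha, hb, h1⟩ | ⟨rfl, rfl⟩)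
        · exact hvirt _ _ h1
        · exact hcx
      · intro b hbr
        by_cases hbx : b = x
        · subst hbx
          refine ⟨c, Or.inr ⟨rfl, rfl⟩, ?_⟩
          rintro a (⟨_, hb, _⟩ | ⟨_, h2⟩)
          · exact absurd rfl hb
          · exact h2
        · obtain ⟨u, hu, huu⟩ := hT'.2.1 ⟨b, hbx⟩ (fun h => hbr (congrArg Subtype.val h))
          refine ⟨u.1, Or.inl ⟨u.2, hbx, hu⟩, ?_⟩
          rintro a (⟨ha, hb', h1⟩ | ⟨h1, _⟩)
          · exact congrArg Subtype.val (huu ⟨a, ha⟩ h1)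
          · exact absurd h1 hbx
      · rintro a (⟨ha, hb, h1⟩ | ⟨h1, _⟩)
        · exact hT'.2.2.1 ⟨a, ha⟩ h1
        · exact hrx h1
      · have key : ∀ n (b : V) (hb : b ≠ x), distR T' ⟨r, hrx⟩ ⟨b, hb⟩ = n →
            Reaches (fun a b =>
              (∃ (ha : a ≠ x) (hb : b ≠ x), T' ⟨a, ha⟩ ⟨b, hb⟩) ∨ (b = x ∧ a = c)) r b := by
          intro n
          induction n using Nat.strong_induction_on with
          | _ n ih =>
            intro b hb hd
            by_cases hbr : b = r
            · subst hbr; exact Relation.ReflTransGen.refl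
            · obtain ⟨u, hu, _⟩ := hT'.2.1 ⟨b, hb⟩ (fun h => hbr (congrArg Subtype.val h))
              have hdu : distR T' ⟨r, hrx⟩ u < n := lt_of_lt_of_eq (parent_lt hT' hu) hd
              exact (ih _ hdu u.1 u.2 rfl).tail (Or.inl ⟨u.2, hb, hu⟩)
        intro b
        by_cases hbx : b = x
        · subst hbx
          exact (key _ c hcxne rfl).tail (Or.inr ⟨rfl, rfl⟩)
        · exact key _ b hbx rfl
      · have hxleaf : ∀ u, ¬ ((∃ (ha : x ≠ x) (hb : u ≠ x), T' ⟨x, ha⟩ ⟨u, hb⟩) ∨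
            (u = x ∧ x = c)) := by
          rintro u (⟨ha, _⟩ | ⟨_, h2⟩)
          · exact ha rfl
          · exact hcxne h2.symm
        refine Set.ncard_le_ncard_of_injOn (fun v => if v.1 = c then x else v.1) ?_ ?_
          (Set.toFinite _)
        · intro v hv
          by_cases hvc : v.1 = c
          · simp only [Set.mem_setOf_eq, if_pos hvc]
            exact hxleaf
          · simp only [Set.mem_setOf_eq, if_neg hvc]
            intro u hTu
            rcases hTu with ⟨ha, hb, h1⟩ | ⟨_, h2⟩
            · exact hv ⟨u, hb⟩ h1
            · exact hvc h2
        · intro a ha b hb h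
          by_cases hac : a.1 = c <;> by_cases hbc : b.1 = c
          · exact Subtype.ext (hac.trans hbc.symm)
          · simp only [if_pos hac, if_neg hbc] at h
            exact absurd h.symm b.2
          · simp only [if_neg hac, if_pos hbc] at h
            exact absurd h a.2
          · simp only [if_neg hac, if_neg hbc] at h
            exact Subtype.ext h

/-- Deleting a cutvertex `x` and adding an arc `(v, z)` for
every in-neighbour `v` of `x` and outneighbour `z ≠ v` of `x` preserves the
maximum number of leaves of an outbranching. -/
theorem rule1_safe [Fintype V] (A : V → V → Prop) (r x : V)
    (hD : IsRootedDigraph A r) (hconn : RConnected A r)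
    (hcut : IsCut A r {x}) :
    maxleaf A r =
      maxleaf (fun u v : {w : V // w ≠ x} =>
          A u.1 v.1 ∨ (u.1 ≠ v.1 ∧ A u.1 x ∧ A x v.1))
        ⟨r, fun h => hcut.1 (Set.mem_singleton_iff.mpr h)⟩ := by
  classical
  have hrx : r ≠ x := fun h => hcut.1 (Set.mem_singleton_iff.mpr h)
  have hcut2 : ∃ z, z ≠ x ∧ ¬ ReachesAvoiding A {x} r z := by
    obtain ⟨hz1, z, hz2, hz3⟩ := hcut
    exact ⟨z, by simpa using hz2, hz3⟩
  obtain ⟨T0, hT0⟩ := exists_outbranching A r hconn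
  obtain ⟨T0', hT0', _⟩ := construct_forward hrx hcut2 hT0
  have bdd1 : BddAbove {n | ∃ T : V → V → Prop, IsOutbranching A r T ∧ n = leafCount T} := by
    refine ⟨Nat.card V, ?_⟩
    rintro n ⟨T, _, rfl⟩
    exact le_of_le_of_eq (Set.ncard_le_ncard (Set.subset_univ _) Set.finite_univ)
      (Set.ncard_univ _)
  have bdd2 : BddAbove {n | ∃ T' : {w : V // w ≠ x} → {w : V // w ≠ x} → Prop,
      IsOutbranching (fun u v => A u.1 v.1 ∨ (u.1 ≠ v.1 ∧ A u.1 x ∧ A x v.1))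
        ⟨r, hrx⟩ T' ∧ n = leafCount T'} := by
    refine ⟨Nat.card {w : V // w ≠ x}, ?_⟩
    rintro n ⟨T', _, rfl⟩
    exact le_of_le_of_eq (Set.ncard_le_ncard (Set.subset_univ _) Set.finite_univ)
      (Set.ncard_univ _)
  unfold maxleaf
  apply le_antisymm
  · refine csSup_le ⟨_, T0, hT0, rfl⟩ ?_
    rintro n ⟨T, hT, rfl⟩
    obtain ⟨T', hT', hle⟩ := construct_forward hrx hcut2 hT
    exact le_trans hle (le_csSup bdd2 ⟨T', hT', rfl⟩)
  · refine csSup_le ⟨_, T0', hT0', rfl⟩ ?_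
    rintro n ⟨T', hT', rfl⟩
    obtain ⟨T, hT, hle⟩ := construct_backward hD.1 hrx hconn hT'
    exact le_trans hle (le_csSup bdd1 ⟨T, hT, rfl⟩)
end

section
/- Let D be a connected rooted digraph containing a bipath P = {x1,…,x5} of length 4, and let D' be the rooted digraph obtained from D by contracting two consecutive internal vertices of P (say x2 and x3) into a single vertex. Then maxleaf(D) = maxleaf(D'). -/
variable {V : Type*}

section Rule2Aux

variable {V : Type*}

/-- The contracted arc relation. -/
def ctr [DecidableEq V] (A : V → V → Prop) (x : Fin 5 → V) :
    {w : V // w ≠ x 2} → {w : V // w ≠ x 2} → Prop :=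
  fun u v => u ≠ v ∧ ∃ a b : V, A a b ∧
    (if a = x 2 then x 1 else a) = u.1 ∧
    (if b = x 2 then x 1 else b) = v.1

lemma ob_no2 {A : V → V → Prop} {r : V} {T : V → V → Prop}
    (hT : IsOutbranching A r T) : ∀ a b, T a b → T b a → False := by
  obtain ⟨hsub, huniq, hroot, hreach⟩ := hT
  have hacc : ∀ v, Acc (fun p q => T p q) v := by
    intro v
    have h := hreach v
    induction h with
    | refl => exact ⟨_, fun y hy => absurd hy (hroot y)⟩
    | @tail b c hrb hbc ih =>
      refine ⟨_, fun y hy => ?_⟩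
      have hc : c ≠ r := fun h => hroot _ (h ▸ hbc)
      have hyb : y = b := ((huniq c hc).unique hy hbc)
      exact hyb ▸ ih
  have key : ∀ a, Acc (fun p q => T p q) a → ∀ b, T a b → T b a → False := by
    intro a ha
    induction ha with
    | intro c hc ih =>
      intro b hcb hbc
      exact ih b hbc c hbc hcb
  exact fun a b hab hba => key a (hacc a) b hab hba

lemma leafCount_le_card [Fintype V] (T : V → V → Prop) :
    leafCount T ≤ Nat.card V := by
  unfold leafCount
  simpa [Set.ncard_univ] using
    Set.ncard_le_ncard (Set.subset_univ {v | ∀ u, ¬ T v u}) Set.finite_univ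

lemma sSup_le_sSup_of_forall {S S' : Set ℕ} (hb : BddAbove S) (hb' : BddAbove S')
    (h : ∀ n ∈ S, ∃ m ∈ S', n ≤ m) : sSup S ≤ sSup S' := by
  rcases S.eq_empty_or_nonempty with h0 | hne
  · rw [h0, csSup_empty]; exact bot_le
  · obtain ⟨m, hm, hle⟩ := h _ (Nat.sSup_mem hne hb)
    exact hle.trans (le_csSup hb' hm)

lemma bp_facts {A : V → V → Prop} {x : Fin 5 → V} (hbp : IsBipath4 A x) :
    (∀ v, A (x 1) v ↔ v = x 0 ∨ v = x 2) ∧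
    (∀ v, A v (x 1) ↔ v = x 0 ∨ v = x 2) ∧
    (∀ v, A (x 2) v ↔ v = x 1 ∨ v = x 3) ∧
    (∀ v, A v (x 2) ↔ v = x 1 ∨ v = x 3) ∧
    (∀ v, A (x 3) v ↔ v = x 2 ∨ v = x 4) ∧
    (∀ v, A v (x 3) ↔ v = x 2 ∨ v = x 4) := by
  have h1 := hbp.2 1 (by decide) (by decide)
  have h2 := hbp.2 2 (by decide) (by decide)
  have h3 := hbp.2 3 (by decide) (by decide)
  simp only [show (1:Fin 5) - 1 = 0 from by decide, show (1:Fin 5) + 1 = 2 from by decide] at h1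
  simp only [show (2:Fin 5) - 1 = 1 from by decide, show (2:Fin 5) + 1 = 3 from by decide] at h2
  simp only [show (3:Fin 5) - 1 = 2 from by decide, show (3:Fin 5) + 1 = 4 from by decide] at h3
  exact ⟨h1.1, h1.2, h2.1, h2.2, h3.1, h3.2⟩

end Rule2Aux

section Rule2Main

variable {V : Type*} [Fintype V] [DecidableEq V]

lemma rule2_forward {A : V → V → Prop} {r : V} {x : Fin 5 → V}
    (hD : IsRootedDigraph A r) (hbp : IsBipath4 A x) (hr : r ≠ x 2)
    {T : V → V → Prop} (hT : IsOutbranching A r T) :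
    ∃ T' : {w : V // w ≠ x 2} → {w : V // w ≠ x 2} → Prop,
      IsOutbranching (ctr A x) ⟨r, hr⟩ T' ∧ leafCount T ≤ leafCount T' := by
  classical
  obtain ⟨out1, in1, out2, in2, out3, in3⟩ := bp_facts hbp
  have hne : ∀ i j : Fin 5, i ≠ j → x i ≠ x j := fun i j h => hbp.1.ne h
  have no2 : ∀ a b, T a b → T b a → False := ob_no2 hT
  have hTA : ∀ u v, T u v → A u v := hT.1
  have looplessT : ∀ a, ¬ T a a := fun a h => hD.1 a (hTA a a h)
  have hrx1 : x 1 ≠ r := fun h => hD.2.1 (x 0) (h ▸ ((in1 (x 0)).2 (Or.inl rfl)))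
  have hrx3 : x 3 ≠ r := fun h => hD.2.1 (x 2) (h ▸ ((in3 (x 2)).2 (Or.inl rfl)))
  obtain ⟨q, hq, hqU⟩ := hT.2.1 (x 2) (Ne.symm hr)
  have hq2 : q ≠ x 2 := fun h => looplessT _ (h ▸ hq)
  have hq13 : q = x 1 ∨ q = x 3 := (in2 q).1 (hTA _ _ hq)
  refine ⟨fun u v => T u.1 v.1 ∨ (T u.1 (x 2) ∧ T (x 2) v.1), ⟨?_, ?_, ?_, ?_⟩, ?_⟩
  · -- subrelation of ctr
    rintro u v (h | ⟨h1, h2⟩)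
    · refine ⟨fun e => looplessT v.1 (e ▸ h), u.1, v.1, hTA _ _ h, if_neg u.2, if_neg v.2⟩
    · have huv : u ≠ v := fun e => no2 u.1 (x 2) h1 (by rw [e]; exact h2)
      have hu13 := (in2 u.1).1 (hTA _ _ h1)
      have hv13 := (out2 v.1).1 (hTA _ _ h2)
      rcases hu13 with hu1 | hu3 <;> rcases hv13 with hv1 | hv3
      · exact absurd (Subtype.ext (hu1.trans hv1.symm)) huv
      · exact ⟨huv, x 2, x 3, (out2 (x 3)).2 (Or.inr rfl),
          by rw [if_pos rfl]; exact hu1.symm,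
          by rw [if_neg (hne 3 2 (by decide))]; exact hv3.symm⟩
      · exact ⟨huv, x 3, x 2, (in2 (x 3)).2 (Or.inr rfl),
          by rw [if_neg (hne 3 2 (by decide))]; exact hu3.symm,
          by rw [if_pos rfl]; exact hv1.symm⟩
      · exact absurd (Subtype.ext (hu3.trans hv3.symm)) huv
  · -- unique parents
    rintro v hv
    have hvr : v.1 ≠ r := fun h => hv (Subtype.ext h)
    obtain ⟨p, hp, hpU⟩ := hT.2.1 v.1 hvr
    by_cases hpx : p = x 2
    · refine ⟨⟨q, hq2⟩, Or.inr ⟨hq, hpx ▸ hp⟩, ?_⟩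
      rintro u' (h | ⟨h1, _⟩)
      · exact absurd ((hpU _ h).trans hpx) u'.2
      · exact Subtype.ext (hqU _ h1)
    · refine ⟨⟨p, hpx⟩, Or.inl hp, ?_⟩
      rintro u' (h | ⟨_, h2⟩)
      · exact Subtype.ext (hpU _ h)
      · exact absurd (hpU _ h2).symm hpx
  · -- nothing into root
    rintro u (h | ⟨_, h2⟩)
    · exact hT.2.2.1 _ h
    · exact hT.2.2.1 _ h2
  · -- reachability
    have main : ∀ w, Reaches T r w →
        (∀ (hw : w ≠ x 2),
          Relation.ReflTransGen
            (fun u v : {w : V // w ≠ x 2} => T u.1 v.1 ∨ (T u.1 (x 2) ∧ T (x 2) v.1))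
            ⟨r, hr⟩ ⟨w, hw⟩) ∧
        (w = x 2 →
          Relation.ReflTransGen
            (fun u v : {w : V // w ≠ x 2} => T u.1 v.1 ∨ (T u.1 (x 2) ∧ T (x 2) v.1))
            ⟨r, hr⟩ ⟨q, hq2⟩) := by
      intro w h
      induction h with
      | refl => exact ⟨fun hw => Relation.ReflTransGen.refl, fun h => absurd h hr⟩
      | @tail b c hrb hbc ih =>
        constructor
        · intro hc
          by_cases hb : b = x 2
          · exact (ih.2 hb).tail (Or.inr ⟨hq, hb ▸ hbc⟩)
          · exact (ih.1 hb).tail (Or.inl hbc)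
        · intro hc
          have hbq : b = q := hqU b (hc ▸ hbc)
          subst hbq
          exact ih.1 hq2
    intro v
    exact (main v.1 (hT.2.2.2 v.1)).1 v.2
  · -- leaf count
    apply Set.ncard_le_ncard_of_injOn
      (fun v => if hv : v = x 2 then (⟨q, hq2⟩ : {w : V // w ≠ x 2}) else ⟨v, hv⟩)
      ?_ ?_ (Set.toFinite _)
    · intro v hv
      simp only [Set.mem_setOf_eq] at hv ⊢
      by_cases h2 : v = x 2
      · subst h2
        rw [dif_pos rfl]
        rintro u (h | ⟨_, h2'⟩)
        · rcases hq13 with hq1 | hq3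
          · subst hq1
            rcases (out1 u.1).1 (hTA _ _ h) with h0 | h2'
            · obtain ⟨p1, hp1, hp1U⟩ := hT.2.1 (x 1) hrx1
              rcases (in1 p1).1 (hTA _ _ hp1) with e0 | e2
              · exact no2 (x 1) (x 0) (h0 ▸ h) (e0 ▸ hp1)
              · exact hv (x 1) (e2 ▸ hp1)
            · exact u.2 h2'
          · subst hq3
            rcases (out3 u.1).1 (hTA _ _ h) with h2' | h4
            · exact u.2 h2'
            · obtain ⟨p3, hp3, hp3U⟩ := hT.2.1 (x 3) hrx3
              rcases (in3 p3).1 (hTA _ _ hp3) with e2 | e4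
              · exact hv (x 3) (e2 ▸ hp3)
              · exact no2 (x 3) (x 4) (h4 ▸ h) (e4 ▸ hp3)
        · exact hv _ h2'
      · rw [dif_neg h2]
        rintro u (h | ⟨h1, _⟩)
        · exact hv _ h
        · exact hv _ h1
    · intro a ha b hb hab
      simp only [Set.mem_setOf_eq] at ha hb
      by_cases ha2 : a = x 2 <;> by_cases hb2 : b = x 2
      · rw [ha2, hb2]
      · simp only [dif_pos ha2, dif_neg hb2] at hab
        have hqb : q = b := congrArg Subtype.val hab
        exact absurd (hqb ▸ hq) (hb (x 2))
      · simp only [dif_neg ha2, dif_pos hb2] at hab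
        have hqa : q = a := congrArg Subtype.val hab.symm
        exact absurd (hqa ▸ hq) (ha (x 2))
      · simp only [dif_neg ha2, dif_neg hb2] at hab
        exact (congrArg Subtype.val hab : a = b)

lemma rule2_backward {A : V → V → Prop} {r : V} {x : Fin 5 → V}
    (hD : IsRootedDigraph A r) (hbp : IsBipath4 A x) (hr : r ≠ x 2)
    {T' : {w : V // w ≠ x 2} → {w : V // w ≠ x 2} → Prop}
    (hT' : IsOutbranching (ctr A x) ⟨r, hr⟩ T') :
    ∃ T : V → V → Prop, IsOutbranching A r T ∧ leafCount T' ≤ leafCount T := by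
  classical
  obtain ⟨out1, in1, out2, in2, out3, in3⟩ := bp_facts hbp
  have hne : ∀ i j : Fin 5, i ≠ j → x i ≠ x j := fun i j h => hbp.1.ne h
  have no2' : ∀ a b, T' a b → T' b a → False := ob_no2 hT'
  have hTA' : ∀ u v, T' u v → ctr A x u v := hT'.1
  have hrx1 : x 1 ≠ r := fun h => hD.2.1 (x 0) (h ▸ ((in1 (x 0)).2 (Or.inl rfl)))
  have hrx3 : x 3 ≠ r := fun h => hD.2.1 (x 2) (h ▸ ((in3 (x 2)).2 (Or.inl rfl)))
  set X0 : {w : V // w ≠ x 2} := ⟨x 0, hne 0 2 (by decide)⟩ with hX0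
  set X1 : {w : V // w ≠ x 2} := ⟨x 1, hne 1 2 (by decide)⟩ with hX1
  set X3 : {w : V // w ≠ x 2} := ⟨x 3, hne 3 2 (by decide)⟩ with hX3
  set X4 : {w : V // w ≠ x 2} := ⟨x 4, hne 4 2 (by decide)⟩ with hX4
  have hX03 : X0 ≠ X3 := fun e => hne 0 3 (by decide) (congrArg Subtype.val e)
  -- in-neighbours of X1 in the contracted digraph
  have hinX1 : ∀ u, ctr A x u X1 → u = X0 ∨ u = X3 := by
    rintro u ⟨hne', a, b, hab, ha, hb⟩
    by_cases hb2 : b = x 2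
    · subst hb2
      rcases (in2 a).1 hab with e | e
      · subst e
        rw [if_neg (hne 1 2 (by decide))] at ha
        exact absurd (Subtype.ext ha.symm) hne'
      · subst e
        rw [if_neg (hne 3 2 (by decide))] at ha
        exact Or.inr (Subtype.ext ha.symm)
    · rw [if_neg hb2] at hb
      subst hb
      rcases (in1 a).1 hab with e | e
      · subst e
        rw [if_neg (hne 0 2 (by decide))] at ha
        exact Or.inl (Subtype.ext ha.symm)
      · subst e
        rw [if_pos rfl] at ha
        exact absurd (Subtype.ext ha.symm) hne'
  have hinX3 : ∀ u, ctr A x u X3 → u = X1 ∨ u = X4 := by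
    rintro u ⟨hne', a, b, hab, ha, hb⟩
    by_cases hb2 : b = x 2
    · subst hb2
      rw [if_pos rfl] at hb
      exact absurd hb (hne 1 3 (by decide))
    · rw [if_neg hb2] at hb
      subst hb
      rcases (in3 a).1 hab with e | e
      · subst e
        rw [if_pos rfl] at ha
        exact Or.inl (Subtype.ext ha.symm)
      · subst e
        rw [if_neg (hne 4 2 (by decide))] at ha
        exact Or.inr (Subtype.ext ha.symm)
  -- lifting an arc of the contracted digraph not incident to the rerouted pairs
  have hliftA : ∀ (u v : {w : V // w ≠ x 2}), ctr A x u v →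
      ¬(u = X3 ∧ v = X1) → ¬(u = X1 ∧ v = X3) → A u.1 v.1 := by
    rintro u v ⟨hne', a, b, hab, ha, hb⟩ hex1 hex2
    by_cases ha2 : a = x 2 <;> by_cases hb2 : b = x 2
    · subst ha2; subst hb2
      rw [if_pos rfl] at ha hb
      exact absurd (Subtype.ext (ha.symm.trans hb)) hne'
    · subst ha2
      rw [if_pos rfl] at ha
      rw [if_neg hb2] at hb
      rcases (out2 b).1 hab with e | e
      · exact absurd (Subtype.ext ((ha.symm.trans (e ▸ hb)).symm ▸ rfl)) hne'
      · exact absurd ⟨Subtype.ext ha.symm, Subtype.ext (e ▸ hb).symm⟩ hex2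
    · subst hb2
      rw [if_pos rfl] at hb
      rw [if_neg ha2] at ha
      rcases (in2 a).1 hab with e | e
      · exact absurd (Subtype.ext ((e ▸ ha).symm.trans hb)) hne'
      · exact absurd ⟨Subtype.ext (e ▸ ha).symm, Subtype.ext hb.symm⟩ hex1
    · rw [if_neg ha2] at ha
      rw [if_neg hb2] at hb
      subst ha; subst hb
      exact hab
  have hX1r : X1 ≠ (⟨r, hr⟩ : {w : V // w ≠ x 2}) :=
    fun e => hrx1 (congrArg Subtype.val e)
  have hX3r : X3 ≠ (⟨r, hr⟩ : {w : V // w ≠ x 2}) :=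
    fun e => hrx3 (congrArg Subtype.val e)
  obtain ⟨P1, hP1, hP1U⟩ := hT'.2.1 X1 hX1r
  have hP1cases : P1 = X0 ∨ P1 = X3 := hinX1 P1 (hTA' _ _ hP1)
  refine ⟨fun u v =>
    (∃ (hu : u ≠ x 2) (hv : v ≠ x 2), T' ⟨u, hu⟩ ⟨v, hv⟩ ∧
      ¬(u = x 3 ∧ v = x 1) ∧ ¬(u = x 1 ∧ v = x 3))
    ∨ (u = x 3 ∧ v = x 2 ∧ T' X3 X1)
    ∨ (u = x 2 ∧ v = x 3 ∧ T' X1 X3)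
    ∨ (u = x 1 ∧ v = x 2 ∧ T' X0 X1)
    ∨ (u = x 2 ∧ v = x 1 ∧ T' X3 X1), ⟨?_, ?_, ?_, ?_⟩, ?_⟩
  · -- subrelation of A
    rintro u v (⟨hu, hv, h', hex1, hex2⟩ | ⟨e1, e2, _⟩ | ⟨e1, e2, _⟩ | ⟨e1, e2, _⟩ | ⟨e1, e2, _⟩)
    · exact hliftA _ _ (hTA' _ _ h')
        (fun ⟨a1, a2⟩ => hex1 ⟨congrArg Subtype.val a1, congrArg Subtype.val a2⟩)
        (fun ⟨a1, a2⟩ => hex2 ⟨congrArg Subtype.val a1, congrArg Subtype.val a2⟩)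
    · subst e1; subst e2; exact (out3 (x 2)).2 (Or.inl rfl)
    · subst e1; subst e2; exact (out2 (x 3)).2 (Or.inr rfl)
    · subst e1; subst e2; exact (out1 (x 2)).2 (Or.inr rfl)
    · subst e1; subst e2; exact (out2 (x 1)).2 (Or.inl rfl)
  · -- unique parents
    intro v hvr
    by_cases hv2 : v = x 2
    · subst hv2
      rcases hP1cases with e | e
      · subst e
        refine ⟨x 1, Or.inr (Or.inr (Or.inr (Or.inl ⟨rfl, rfl, hP1⟩))), ?_⟩
        rintro u' (⟨_, hv', _⟩ | ⟨_, _, h31⟩ | ⟨_, e2, _⟩ | ⟨e1, _, _⟩ | ⟨_, e2, _⟩)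
        · exact absurd rfl hv'
        · exact absurd (hP1U X3 h31) (Ne.symm hX03)
        · exact absurd e2 (hne 2 3 (by decide))
        · exact e1
        · exact absurd e2 (hne 2 1 (by decide))
      · subst e
        refine ⟨x 3, Or.inr (Or.inl ⟨rfl, rfl, hP1⟩), ?_⟩
        rintro u' (⟨_, hv', _⟩ | ⟨e1, _, _⟩ | ⟨_, e2, _⟩ | ⟨_, _, h01⟩ | ⟨_, e2, _⟩)
        · exact absurd rfl hv'
        · exact e1
        · exact absurd e2 (hne 2 3 (by decide))
        · exact absurd (hP1U X0 h01) hX03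
        · exact absurd e2 (hne 2 1 (by decide))
    · by_cases hv1 : v = x 1
      · subst hv1
        rcases hP1cases with e | e
        · refine ⟨x 0, Or.inl ⟨hne 0 2 (by decide), hne 1 2 (by decide), ?_,
            fun h => hne 0 3 (by decide) h.1, fun h => hne 0 1 (by decide) h.1⟩, ?_⟩
          · exact (show T' X0 X1 from e ▸ hP1)
          · rintro u' (⟨hu, hv', h', _, _⟩ | ⟨_, e2, _⟩ | ⟨_, e2, _⟩ | ⟨_, e2, _⟩ | ⟨_, _, h31⟩)
            · have := hP1U ⟨u', hu⟩ h'
              rw [e] at this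
              exact congrArg Subtype.val this
            · exact absurd e2 (hne 1 2 (by decide))
            · exact absurd e2 (hne 1 3 (by decide))
            · exact absurd e2 (hne 1 2 (by decide))
            · exact absurd (hP1U X3 h31) (e ▸ Ne.symm hX03)
        · refine ⟨x 2, Or.inr (Or.inr (Or.inr (Or.inr ⟨rfl, rfl, e ▸ hP1⟩))), ?_⟩
          rintro u' (⟨hu, hv', h', hex1, _⟩ | ⟨_, e2, _⟩ | ⟨_, e2, _⟩ | ⟨_, e2, _⟩ | ⟨e1, _, _⟩)
          · exfalso
            have := hP1U ⟨u', hu⟩ h'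
            rw [e] at this
            exact hex1 ⟨congrArg Subtype.val this, rfl⟩
          · exact absurd e2 (hne 1 2 (by decide))
          · exact absurd e2 (hne 1 3 (by decide))
          · exact absurd e2 (hne 1 2 (by decide))
          · exact e1
      · by_cases hv3 : v = x 3
        · subst hv3
          obtain ⟨P3, hP3, hP3U⟩ := hT'.2.1 X3 hX3r
          rcases hinX3 P3 (hTA' _ _ hP3) with e | e
          · refine ⟨x 2, Or.inr (Or.inr (Or.inl ⟨rfl, rfl, e ▸ hP3⟩)), ?_⟩
            rintro u' (⟨hu, hv', h', _, hex2⟩ | ⟨_, e2, _⟩ | ⟨e1, _, _⟩ | ⟨_, e2, _⟩ | ⟨_, e2, _⟩)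
            · exfalso
              have := hP3U ⟨u', hu⟩ h'
              rw [e] at this
              exact hex2 ⟨congrArg Subtype.val this, rfl⟩
            · exact absurd e2 (hne 3 2 (by decide))
            · exact e1
            · exact absurd e2 (hne 3 2 (by decide))
            · exact absurd e2 (hne 3 1 (by decide))
          · refine ⟨x 4, Or.inl ⟨hne 4 2 (by decide), hne 3 2 (by decide), e ▸ hP3,
              fun h => hne 4 3 (by decide) h.1, fun h => hne 4 1 (by decide) h.1⟩, ?_⟩
            rintro u' (⟨hu, hv', h', _, _⟩ | ⟨_, e2, _⟩ | ⟨_, _, h13⟩ | ⟨_, e2, _⟩ | ⟨_, e2, _⟩)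
            · have := hP3U ⟨u', hu⟩ h'
              rw [e] at this
              exact congrArg Subtype.val this
            · exact absurd e2 (hne 3 2 (by decide))
            · exact absurd (hP3U X1 h13) (e ▸ fun h => hne 1 4 (by decide) (congrArg Subtype.val h))
            · exact absurd e2 (hne 3 2 (by decide))
            · exact absurd e2 (hne 3 1 (by decide))
        · obtain ⟨Pv, hPv, hPvU⟩ := hT'.2.1 ⟨v, hv2⟩ (fun e => hvr (congrArg Subtype.val e))
          refine ⟨Pv.1, Or.inl ⟨Pv.2, hv2, hPv, fun h => hv1 h.2, fun h => hv3 h.2⟩, ?_⟩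
          rintro u' (⟨hu, hv', h', _, _⟩ | ⟨_, e2, _⟩ | ⟨_, e2, _⟩ | ⟨_, e2, _⟩ | ⟨_, e2, _⟩)
          · exact congrArg Subtype.val (hPvU ⟨u', hu⟩ h')
          · exact absurd e2 hv2
          · exact absurd e2 hv3
          · exact absurd e2 hv2
          · exact absurd e2 hv1
  · -- nothing into the root
    rintro u (⟨hu, hv, h', _, _⟩ | ⟨_, e2, _⟩ | ⟨_, e2, _⟩ | ⟨_, e2, _⟩ | ⟨_, e2, _⟩)
    · exact hT'.2.2.1 ⟨u, hu⟩ h'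
    · exact hr e2
    · exact hrx3 e2.symm
    · exact hr e2
    · exact hrx1 e2.symm
  · -- reachability
    have claim : ∀ w' : {w : V // w ≠ x 2},
        Relation.ReflTransGen T' ⟨r, hr⟩ w' →
        Relation.ReflTransGen (fun u v =>
          (∃ (hu : u ≠ x 2) (hv : v ≠ x 2), T' ⟨u, hu⟩ ⟨v, hv⟩ ∧
            ¬(u = x 3 ∧ v = x 1) ∧ ¬(u = x 1 ∧ v = x 3))
          ∨ (u = x 3 ∧ v = x 2 ∧ T' X3 X1)
          ∨ (u = x 2 ∧ v = x 3 ∧ T' X1 X3)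
          ∨ (u = x 1 ∧ v = x 2 ∧ T' X0 X1)
          ∨ (u = x 2 ∧ v = x 1 ∧ T' X3 X1)) r w'.1 := by
      intro w' h
      induction h with
      | refl => exact Relation.ReflTransGen.refl
      | @tail b' c' hrb hbc ih =>
        by_cases h31 : b' = X3 ∧ c' = X1
        · obtain ⟨e3, e1⟩ := h31
          subst e3; subst e1
          exact (ih.tail (Or.inr (Or.inl ⟨rfl, rfl, hbc⟩))).tail
            (Or.inr (Or.inr (Or.inr (Or.inr ⟨rfl, rfl, hbc⟩))))
        · by_cases h13 : b' = X1 ∧ c' = X3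
          · obtain ⟨e1, e3⟩ := h13
            subst e1; subst e3
            have h01 : T' X0 X1 := by
              rcases hP1cases with e | e
              · exact e ▸ hP1
              · exact absurd (e ▸ hP1) (fun h => no2' X1 X3 hbc h)
            exact (ih.tail (Or.inr (Or.inr (Or.inr (Or.inl ⟨rfl, rfl, h01⟩))))).tail
              (Or.inr (Or.inr (Or.inl ⟨rfl, rfl, hbc⟩)))
          · exact ih.tail (Or.inl ⟨b'.2, c'.2, hbc,
              fun h => h31 ⟨Subtype.ext h.1, Subtype.ext h.2⟩,
              fun h => h13 ⟨Subtype.ext h.1, Subtype.ext h.2⟩⟩)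
    intro v
    by_cases hv2 : v = x 2
    · subst hv2
      rcases hP1cases with e | e
      · exact (claim X1 (hT'.2.2.2 X1)).tail
          (Or.inr (Or.inr (Or.inr (Or.inl ⟨rfl, rfl, e ▸ hP1⟩))))
      · exact (claim X3 (hT'.2.2.2 X3)).tail
          (Or.inr (Or.inl ⟨rfl, rfl, e ▸ hP1⟩))
    · exact claim ⟨v, hv2⟩ (hT'.2.2.2 _)
  · -- leaf count
    apply Set.ncard_le_ncard_of_injOn
      (fun u' => if u' = X1 ∧ T' X0 X1 then x 2 else u'.1) ?_ ?_ (Set.toFinite _)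
    · intro u' hu'
      simp only [Set.mem_setOf_eq] at hu' ⊢
      by_cases hcond : u' = X1 ∧ T' X0 X1
      · rw [if_pos hcond]
        rintro w (⟨hu, _, _, _⟩ | ⟨e1, _, _⟩ | ⟨_, _, h13⟩ | ⟨e1, _, _⟩ | ⟨_, _, h31⟩)
        · exact hu rfl
        · exact hne 2 3 (by decide) e1
        · exact hu' X3 (hcond.1 ▸ h13)
        · exact hne 2 1 (by decide) e1
        · exact hX03 ((hP1U X0 hcond.2).trans (hP1U X3 h31).symm)
      · rw [if_neg hcond]
        rintro w (⟨hu, hv, h', _, _⟩ | ⟨e3, _, h31⟩ | ⟨e2, _, _⟩ | ⟨e1, _, h01⟩ | ⟨e2, _, _⟩)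
        · exact hu' ⟨w, hv⟩ h'
        · exact hu' X1 ((Subtype.ext e3 : u' = X3) ▸ h31)
        · exact u'.2 e2
        · exact hcond ⟨Subtype.ext e1, h01⟩
        · exact u'.2 e2
    · intro a' ha' b' hb' heq
      simp only at heq
      by_cases hca : a' = X1 ∧ T' X0 X1 <;> by_cases hcb : b' = X1 ∧ T' X0 X1
      · rw [hca.1, hcb.1]
      · rw [if_pos hca, if_neg hcb] at heq
        exact absurd heq.symm b'.2
      · rw [if_neg hca, if_pos hcb] at heq
        exact absurd heq a'.2
      · rw [if_neg hca, if_neg hcb] at heq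
        exact Subtype.ext heq

end Rule2Main

/-- Contracting two consecutive internal vertices (`x 1` and
`x 2`) of a bipath of length 4 preserves the maximum number of leaves of an
outbranching. -/
theorem rule2_safe [Fintype V] [DecidableEq V] (A : V → V → Prop) (r : V)
    (x : Fin 5 → V)
    (hD : IsRootedDigraph A r) (hconn : RConnected A r)
    (hbp : IsBipath4 A x) (hr : r ≠ x 2) :
    maxleaf A r =
      maxleaf (fun u v : {w : V // w ≠ x 2} =>
          u ≠ v ∧ ∃ a b : V, A a b ∧
            (if a = x 2 then x 1 else a) = u.1 ∧
            (if b = x 2 then x 1 else b) = v.1)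
        ⟨r, hr⟩ := by
  classical
  show maxleaf A r = maxleaf (ctr A x) ⟨r, hr⟩
  apply le_antisymm
  · refine sSup_le_sSup_of_forall ⟨Nat.card V, ?_⟩
      ⟨Nat.card {w : V // w ≠ x 2}, ?_⟩ ?_
    · rintro n ⟨T, _, rfl⟩; exact leafCount_le_card T
    · rintro n ⟨T', _, rfl⟩; exact leafCount_le_card T'
    · rintro n ⟨T, hT, rfl⟩
      obtain ⟨T', hT', hle⟩ := rule2_forward hD hbp hr hT
      exact ⟨leafCount T', ⟨T', hT', rfl⟩, hle⟩
  · refine sSup_le_sSup_of_forall ⟨Nat.card {w : V // w ≠ x 2}, ?_⟩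
      ⟨Nat.card V, ?_⟩ ?_
    · rintro n ⟨T', _, rfl⟩; exact leafCount_le_card T'
    · rintro n ⟨T, _, rfl⟩; exact leafCount_le_card T
    · rintro n ⟨T', hT', rfl⟩
      obtain ⟨T, hT, hle⟩ := rule2_backward hD hbp hr hT'
      exact ⟨leafCount T, ⟨T, hT, rfl⟩, hle⟩
end

section
/- Let D be a connected rooted digraph, let x be a vertex of D, and let y be an in-neighbour of x such that N⁻(x)−y cuts y from r, i.e. y is the endpoint of no directed path from r in D−(N⁻(x)−y). Then the rooted digraph D' obtained from D by deleting the arc (y,x) satisfies maxleaf(D') = maxleaf(D). -/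
variable {V : Type*}

/-! The arc `(y, x)` only matters for outbranchings `T` using it. In such a `T` the path
from `r` to `y` does not enter `x`, and since `N⁻(x) − y` cuts `y` from `r` it passes through
some `u ∈ N⁻(x) − y`, which is not a leaf because the path continues after it. Making `u`
instead of `y` the parent of `x` gives an outbranching avoiding `(y, x)` whose leaves include
those of `T`. -/

theorem IsOutbranching.of_subgraph {A B T : V → V → Prop} {r : V} (hT : IsOutbranching A r T)
    (hTB : ∀ u v, T u v → B u v) : IsOutbranching B r T :=
  ⟨hTB, hT.2⟩

theorem maxleaf_le_of_forall_exists [Finite V] {A B : V → V → Prop} {r : V}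
    (h : ∀ T, IsOutbranching A r T →
      ∃ T', IsOutbranching B r T' ∧ leafCount T ≤ leafCount T') :
    maxleaf A r ≤ maxleaf B r := by
  have hbdd : BddAbove {n | ∃ T, IsOutbranching B r T ∧ n = leafCount T} :=
    ⟨Nat.card V, fun _ ⟨T, _, hn⟩ => hn ▸ Set.ncard_le_card _⟩
  refine csSup_le' fun n ⟨T, hT, hn⟩ => ?_
  obtain ⟨T', hT', hle⟩ := h T hT
  exact hn ▸ hle.trans (le_csSup hbdd ⟨T', hT', rfl⟩)

theorem reflTransGen_not_entering_of_pred_eq {T : V → V → Prop} {a x y : V}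
    (hpred : ∀ w, T w x → w = y) (h : Relation.ReflTransGen T a y) :
    Relation.ReflTransGen (fun u v => T u v ∧ v ≠ x) a y := by
  induction h using Relation.ReflTransGen.head_induction_on with
  | refl => exact .refl
  | @head a c hac _ ih =>
    by_cases hcx : c = x
    · subst hcx
      rw [hpred a hac]
    · exact .head ⟨hac, hcx⟩ ih

theorem reachesAvoiding_of_reflTransGen {A T : V → V → Prop} {S : Set V} {a b : V}
    (hTA : ∀ u v, T u v → A u v) (h : Relation.ReflTransGen T a b)
    (hS : ∀ u, Relation.ReflTransGen T a u → Relation.ReflTransGen T u b → u ∉ S) :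
    ReachesAvoiding A S a b := by
  induction h using Relation.ReflTransGen.head_induction_on with
  | refl => exact .refl
  | @head a c hac hcb ih =>
    refine .head ⟨hTA a c hac, hS a .refl (.head hac hcb), hS c (.single hac) hcb⟩ ?_
    exact ih fun u hcu hub => hS u (.head hac hcu) hub

def replaceParent (T : V → V → Prop) (x u : V) : V → V → Prop :=
  fun a b => (T a b ∧ b ≠ x) ∨ (a = u ∧ b = x)

theorem isOutbranching_replaceParent {A B T : V → V → Prop} {r x u : V}
    (hT : IsOutbranching A r T) (hxr : x ≠ r)
    (hru : Relation.ReflTransGen (fun a b => T a b ∧ b ≠ x) r u)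
    (hTB : ∀ a b, T a b → b ≠ x → B a b) (hux : B u x) :
    IsOutbranching B r (replaceParent T x u) := by
  obtain ⟨-, hparent, hroot, hreach⟩ := hT
  refine ⟨?_, fun v hvr => ?_, ?_, fun v => ?_⟩
  · rintro a b (⟨hab, hbx⟩ | ⟨rfl, rfl⟩)
    exacts [hTB a b hab hbx, hux]
  · by_cases hvx : v = x
    · subst hvx
      refine ⟨u, .inr ⟨rfl, rfl⟩, fun w => ?_⟩
      rintro (⟨-, hxx⟩ | ⟨rfl, -⟩)
      exacts [absurd rfl hxx, rfl]
    · obtain ⟨w, hw, hwuniq⟩ := hparent v hvr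
      refine ⟨w, .inl ⟨hw, hvx⟩, fun w' => ?_⟩
      rintro (⟨hw', -⟩ | ⟨-, rfl⟩)
      exacts [hwuniq w' hw', absurd rfl hvx]
  · rintro a (⟨har, -⟩ | ⟨-, hrx⟩)
    exacts [hroot a har, hxr hrx.symm]
  · have hrx : Reaches (replaceParent T x u) r x :=
      (Relation.ReflTransGen.mono (fun _ _ => .inl) _ _ hru).tail (.inr ⟨rfl, rfl⟩)
    induction hreach v with
    | refl => exact .refl
    | @tail b c _ hbc ih =>
      by_cases hcx : c = x
      · exact hcx ▸ hrx
      · exact ih.tail (.inl ⟨hbc, hcx⟩)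

theorem leafCount_le_leafCount_replaceParent [Finite V] {T : V → V → Prop} {x u w : V}
    (huw : T u w) : leafCount T ≤ leafCount (replaceParent T x u) :=
  Set.ncard_le_ncard fun v hv => by
    rintro b (⟨hvb, -⟩ | ⟨rfl, -⟩)
    exacts [hv b hvb, hv w huw]

theorem exists_outbranching_deleteArc_leafCount_le [Finite V] {A T : V → V → Prop} {r x y : V}
    (hcut : ¬ ReachesAvoiding A ({u | A u x} \ {y}) r y) (hT : IsOutbranching A r T) :
    ∃ T', IsOutbranching (fun u v => A u v ∧ ¬(u = y ∧ v = x)) r T' ∧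
      leafCount T ≤ leafCount T' := by
  by_cases hyx : T y x
  swap
  · refine ⟨T, hT.of_subgraph fun u v huv => ⟨hT.1 u v huv, ?_⟩, le_rfl⟩
    rintro ⟨rfl, rfl⟩
    exact hyx huv
  have ⟨hTA, hparent, hroot, hreach⟩ := hT
  have hxr : x ≠ r := fun h => hroot y (h ▸ hyx)
  have hry := reflTransGen_not_entering_of_pred_eq
    (fun w hw => (hparent x hxr).unique hw hyx) (hreach y)
  have hvia : ∃ u ∈ {u | A u x} \ {y},
      Relation.ReflTransGen (fun a b => T a b ∧ b ≠ x) r u ∧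
        Relation.ReflTransGen (fun a b => T a b ∧ b ≠ x) u y := by
    by_contra! h
    exact hcut (reachesAvoiding_of_reflTransGen (fun a b hab => hTA a b hab.1) hry
      fun u hru huy huS => h u huS hru huy)
  obtain ⟨u, ⟨hux, huy⟩, hru, hupath⟩ := hvia
  obtain ⟨w, ⟨huw, -⟩, -⟩ := hupath.cases_head.resolve_left huy
  exact ⟨replaceParent T x u,
    isOutbranching_replaceParent hT hxr hru
      (fun a b hab hbx => ⟨hTA a b hab, fun h => hbx h.2⟩) ⟨hux, fun h => huy h.1⟩,
    leafCount_le_leafCount_replaceParent huw⟩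

theorem rule3_safe_general [Fintype V] (A : V → V → Prop) (r x y : V)
    (hcut : ¬ ReachesAvoiding A ({u | A u x} \ {y}) r y) :
    maxleaf (fun u v => A u v ∧ ¬(u = y ∧ v = x)) r = maxleaf A r :=
  le_antisymm
    (maxleaf_le_of_forall_exists fun T hT =>
      ⟨T, hT.of_subgraph fun u v huv => (hT.1 u v huv).1, le_rfl⟩)
    (maxleaf_le_of_forall_exists fun _ hT => exists_outbranching_deleteArc_leafCount_le hcut hT)

/-- If `y` is an in-neighbour of `x` such that `N⁻(x) − y`
cuts `y` from `r`, then deleting the arc `(y, x)` preserves the maximum number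
of leaves of an outbranching. -/
theorem rule3_safe [Fintype V] (A : V → V → Prop) (r x y : V)
    (hD : IsRootedDigraph A r) (hconn : RConnected A r)
    (hyx : A y x)
    (hcut : ¬ ReachesAvoiding A ({u | A u x} \ {y}) r y) :
    maxleaf (fun u v => A u v ∧ ¬(u = y ∧ v = x)) r = maxleaf A r :=
  rule3_safe_general A r x y hcut
end

section
/- Let D be a connected rooted digraph and let x be a vertex of D of indegree at least k such that for every in-neighbour y of x, the set N⁻(x)−y does not cut y from r (i.e. there is a directed path from r to y in D−(N⁻(x)−y)). Then D has an outbranching with at least k leaves. -/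
variable {V : Type*}

/-!
Delete the out-arcs of `S = N⁻(x)`. The no-cut hypothesis makes every `y ∈ S` reachable from
`r` in what remains, so a search tree grown there covers `S`, misses `x` and has every vertex of
`S` as a leaf. Adding one arc `y₀ x` makes `x` a leaf and costs only the leaf `y₀`. Extending a
partial outbranching greedily, one arc leaving its vertex set at a time, never decreases the
number of leaves: the new vertex is a leaf and at most one old leaf stops being one.
-/

open Relation

def deleteOutArcs (A : V → V → Prop) (S : Set V) : V → V → Prop :=
  fun u v => A u v ∧ u ∉ S

def addArc (T : V → V → Prop) (u w : V) : V → V → Prop :=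
  fun a b => T a b ∨ (a = u ∧ b = w)

structure IsPartialOutbranching (R : V → V → Prop) (r : V) (F : Set V) (T : V → V → Prop) :
    Prop where
  root_mem : r ∈ F
  le : ∀ u v, T u v → R u v
  tail_mem : ∀ u v, T u v → u ∈ F
  head_mem : ∀ u v, T u v → v ∈ F
  existsUnique_parent : ∀ v ∈ F, v ≠ r → ∃! u, T u v
  not_arc_root : ∀ u, ¬ T u r
  reflTransGen : ∀ v ∈ F, ReflTransGen T r v

def leafSet (F : Set V) (T : V → V → Prop) : Set V :=
  {v ∈ F | ∀ u, ¬ T v u}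

theorem Set.ncard_le_ncard_insert_sdiff_singleton {α : Type*} {s : Set α} {a b : α}
    (ha : a ∉ s) (hs : s.Finite) : s.ncard ≤ (insert a (s \ {b})).ncard := by
  have hdel := s.pred_ncard_le_ncard_sdiff_singleton b
  rw [Set.ncard_insert_of_notMem (fun h => ha h.1) hs.sdiff]
  omega

theorem Set.ncard_sdiff_insert_lt {α : Type*} {s t : Set α} {a : α} (has : a ∈ s)
    (hat : a ∉ t) (hs : s.Finite) : (s \ insert a t).ncard < (s \ t).ncard := by
  refine Set.ncard_lt_ncard ((Set.ssubset_iff_of_subset ?_).mpr ⟨a, ⟨has, hat⟩, ?_⟩) hs.sdiff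
  · exact Set.sdiff_subset_sdiff_right (Set.subset_insert a t)
  · exact fun ha => ha.2 (Set.mem_insert a t)

theorem Relation.ReflTransGen.exists_arc_leaving {α : Type*} {R : α → α → Prop} {s : Set α}
    {a b : α} (h : ReflTransGen R a b) (ha : a ∈ s) (hb : b ∉ s) :
    ∃ u ∈ s, ∃ w ∉ s, ReflTransGen R a u ∧ R u w := by
  induction h with
  | refl => exact absurd ha hb
  | @tail c d hac hcd ih =>
    by_cases hc : c ∈ s
    · exact ⟨c, hc, d, hb, hac, hcd⟩
    · exact ih hc

/-- A path from `a` to `y` avoiding `S \ {y}` may be cut at its first visit to `y`, and then no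
arc of it leaves `S`. -/
theorem ReachesAvoiding.reflTransGen_deleteOutArcs {A : V → V → Prop} {S : Set V} {a y : V}
    (h : ReachesAvoiding A (S \ {y}) a y) : ReflTransGen (deleteOutArcs A S) a y := by
  induction h using ReflTransGen.head_induction_on with
  | refl => exact .refl
  | @head a c hac _ ih =>
    by_cases hay : a = y
    · exact hay ▸ .refl
    · exact .head ⟨hac.1, fun haS => hac.2.1 ⟨haS, hay⟩⟩ ih

namespace IsPartialOutbranching

variable {R : V → V → Prop} {r : V}

theorem singleton : IsPartialOutbranching R r {r} (fun _ _ => False) where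
  root_mem := rfl
  le _ _ := False.elim
  tail_mem _ _ := False.elim
  head_mem _ _ := False.elim
  existsUnique_parent _ hv hvr := (hvr hv).elim
  not_arc_root _ := id
  reflTransGen _ hv := hv ▸ .refl

section

variable {F : Set V} {T : V → V → Prop}

theorem mono {R' : V → V → Prop} (h : IsPartialOutbranching R r F T)
    (hR : ∀ u v, R u v → R' u v) : IsPartialOutbranching R' r F T :=
  { h with le := fun u v huv => hR u v (h.le u v huv) }

theorem insert_addArc (h : IsPartialOutbranching R r F T) {u w : V} (hR : R u w) (hu : u ∈ F)
    (hw : w ∉ F) : IsPartialOutbranching R r (insert w F) (addArc T u w) where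
  root_mem := Set.mem_insert_of_mem _ h.root_mem
  le := by
    rintro a b (hab | ⟨rfl, rfl⟩)
    exacts [h.le a b hab, hR]
  tail_mem := by
    rintro a b (hab | ⟨rfl, rfl⟩)
    exacts [Set.mem_insert_of_mem _ (h.tail_mem a b hab), Set.mem_insert_of_mem _ hu]
  head_mem := by
    rintro a b (hab | ⟨rfl, rfl⟩)
    exacts [Set.mem_insert_of_mem _ (h.head_mem a b hab), Set.mem_insert _ _]
  existsUnique_parent := by
    rintro v (rfl | hvF) hvr
    · refine ⟨u, Or.inr ⟨rfl, rfl⟩, ?_⟩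
      rintro p (hp | ⟨rfl, -⟩)
      exacts [absurd (h.head_mem p v hp) hw, rfl]
    · obtain ⟨p, hp, hp_unique⟩ := h.existsUnique_parent v hvF hvr
      refine ⟨p, Or.inl hp, ?_⟩
      rintro q (hq | ⟨rfl, rfl⟩)
      exacts [hp_unique q hq, absurd hvF hw]
  not_arc_root := by
    rintro p (hp | ⟨rfl, rfl⟩)
    exacts [h.not_arc_root p hp, hw h.root_mem]
  reflTransGen := by
    have hT : ∀ v ∈ F, ReflTransGen (addArc T u w) r v :=
      fun v hv => ReflTransGen.mono (fun _ _ => Or.inl) _ _ (h.reflTransGen v hv)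
    rintro v (rfl | hvF)
    exacts [(hT u hu).tail (Or.inr ⟨rfl, rfl⟩), hT v hvF]

theorem leafSet_insert_addArc (h : IsPartialOutbranching R r F T) {u w : V} (hu : u ∈ F)
    (hw : w ∉ F) :
    leafSet (insert w F) (addArc T u w) = insert w (leafSet F T \ {u}) := by
  ext v
  simp only [leafSet, addArc, Set.mem_ofPred_eq, Set.mem_insert_iff, Set.mem_sdiff,
    Set.mem_singleton_iff, not_or, not_and]
  constructor
  · rintro ⟨rfl | hvF, hleaf⟩
    · exact Or.inl rfl
    · exact Or.inr ⟨⟨hvF, fun q => (hleaf q).1⟩, fun hvu => (hleaf w).2 hvu rfl⟩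
  · rintro (rfl | ⟨⟨hvF, hleaf⟩, hvu⟩)
    · exact ⟨Or.inl rfl, fun q => ⟨fun hq => hw (h.tail_mem _ q hq),
        fun hwu => absurd (hwu ▸ hu) hw⟩⟩
    · exact ⟨Or.inr hvF, fun q => ⟨hleaf q, fun huv => absurd huv hvu⟩⟩

end

theorem exists_extension_to_reachable [Finite V] {F : Set V} {T : V → V → Prop}
    (h : IsPartialOutbranching R r F T) :
    ∃ F' T', IsPartialOutbranching R r F' T' ∧ {v | ReflTransGen R r v} ⊆ F' ∧
      (leafSet F T).ncard ≤ (leafSet F' T').ncard := by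
  by_cases hF : {v | ReflTransGen R r v} ⊆ F
  · exact ⟨F, T, h, hF, le_rfl⟩
  obtain ⟨z, hz, hzF⟩ := Set.not_subset.mp hF
  obtain ⟨u, hu, w, hw, hru, huw⟩ := ReflTransGen.exists_arc_leaving hz h.root_mem hzF
  have hw_reach : ReflTransGen R r w := hru.tail huw
  obtain ⟨F', T', h', hsub, hleaf⟩ :=
    (h.insert_addArc huw hu hw).exists_extension_to_reachable
  refine ⟨F', T', h', hsub, le_trans ?_ hleaf⟩
  rw [h.leafSet_insert_addArc hu hw]
  exact Set.ncard_le_ncard_insert_sdiff_singleton (fun hwF => hw hwF.1) (Set.toFinite _)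
termination_by ({v | ReflTransGen R r v} \ F).ncard
decreasing_by exact Set.ncard_sdiff_insert_lt hw_reach hw (Set.toFinite _)

theorem exists_isOutbranching [Finite V] {A : V → V → Prop} {F : Set V} {T : V → V → Prop}
    (hconn : RConnected A r) (h : IsPartialOutbranching A r F T) :
    ∃ T', IsOutbranching A r T' ∧ (leafSet F T).ncard ≤ leafCount T' := by
  obtain ⟨F', T', h', hsub, hleaf⟩ := h.exists_extension_to_reachable
  obtain rfl : F' = Set.univ := Set.eq_univ_of_forall fun v => hsub (hconn v)
  refine ⟨T', ⟨h'.le, fun v => h'.existsUnique_parent v trivial, h'.not_arc_root,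
    fun v => h'.reflTransGen v trivial⟩, ?_⟩
  simpa [leafSet, leafCount] using hleaf

end IsPartialOutbranching

theorem exists_isPartialOutbranching_indeg_le_ncard_leafSet [Finite V] {A : V → V → Prop}
    {r x : V} (hD : IsRootedDigraph A r)
    (hnocut : ∀ y, A y x → ReachesAvoiding A ({u | A u x} \ {y}) r y) :
    ∃ F T, IsPartialOutbranching A r F T ∧ indeg A x ≤ (leafSet F T).ncard := by
  set S : Set V := {u | A u x}
  rcases S.eq_empty_or_nonempty with hS | ⟨y, hy⟩
  · refine ⟨{r}, _, .singleton, ?_⟩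
    rw [indeg, show {u | A u x} = S from rfl, hS, Set.ncard_empty]
    exact Nat.zero_le _
  obtain ⟨F, T, hT, hreach, -⟩ := (IsPartialOutbranching.singleton
    (R := deleteOutArcs A S) (r := r)).exists_extension_to_reachable
  have hSF : S ⊆ F := fun y hy => hreach (hnocut y hy).reflTransGen_deleteOutArcs
  have hS_leafSet : S ⊆ leafSet F T := fun v hv => ⟨hSF hv, fun u hvu => (hT.le v u hvu).2 hv⟩
  have hxF : x ∉ F := by
    intro hx
    obtain ⟨u, hux, -⟩ := hT.existsUnique_parent x hx (fun hxr => hD.2.1 y (hxr ▸ hy))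
    exact (hT.le u x hux).2 (hT.le u x hux).1
  refine ⟨_, _, (hT.mono fun _ _ huv => huv.1).insert_addArc hy (hSF hy) hxF, ?_⟩
  rw [hT.leafSet_insert_addArc (hSF hy) hxF]
  calc indeg A x = S.ncard := rfl
    _ ≤ (insert x (S \ {y})).ncard :=
      Set.ncard_le_ncard_insert_sdiff_singleton (hD.1 x) (Set.toFinite _)
    _ ≤ (insert x (leafSet F T \ {y})).ncard :=
      Set.ncard_le_ncard (Set.insert_subset_insert (Set.sdiff_subset_sdiff_left hS_leafSet))

/-- If `x` has indegree at least `k` and, for every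
in-neighbour `y` of `x`, the set `N⁻(x) − y` does not cut `y` from `r`, then
`D` has an outbranching with at least `k` leaves. -/
theorem large_indegree_many_leaves [Fintype V] (A : V → V → Prop) (r x : V)
    (k : ℕ)
    (hD : IsRootedDigraph A r) (hconn : RConnected A r)
    (hdeg : k ≤ indeg A x)
    (hnocut : ∀ y, A y x → ReachesAvoiding A ({u | A u x} \ {y}) r y) :
    ∃ T : V → V → Prop, IsOutbranching A r T ∧ k ≤ leafCount T := by
  obtain ⟨F, T, hT, hleaves⟩ := exists_isPartialOutbranching_indeg_le_ncard_leafSet hD hnocut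
  obtain ⟨T', hT', hle⟩ := hT.exists_isOutbranching hconn
  exact ⟨T', hT', hdeg.trans (hleaves.trans hle)⟩
end

section
/- Let D be a 2-connected rooted digraph containing no bipath of length 4, in which every vertex has indegree at most d. Then the number of non-special vertices of D is at most 3d times the number of special vertices of D. -/
variable {V : Type*}

/-!
Call a vertex *pointing* if one of its out-neighbours is special; counting in-arcs of special
vertices, there are at most `d` pointing vertices per special vertex. A non-special vertex `v`
that is not pointing has exactly two neighbours `a`, `b`, each joined to `v` in both directions.
If neither `a` nor `b` were pointing, then, since `{v}` is not a cut, each of them would have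
exactly one further neighbour `a'`, `b'`, again joined in both directions. Then `a' a v b b'` is
either a bipath of length 4 or, when two of these vertices coincide, a set closed under
in-neighbours that misses the root, which contradicts connectivity. So every non-special vertex
is pointing or is an in-neighbour of a non-special pointing vertex, and a non-special vertex has
at most two in-neighbours; hence there are at most `3 * #pointing ≤ 3 d * #special` non-special
vertices.
-/

def PointsToSpecial (A : V → V → Prop) (v : V) : Prop := ∃ s, A v s ∧ Special A s

def IsBipathInterior (A : V → V → Prop) (x p q : V) : Prop :=
  (∀ w, A x w ↔ w = p ∨ w = q) ∧ (∀ w, A w x ↔ w = p ∨ w = q)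

def IsInClosed (A : V → V → Prop) (C : Set V) : Prop := ∀ x ∈ C, ∀ u, A u x → u ∈ C

section

variable {A : V → V → Prop}

theorem IsBipathInterior.symm {x p q : V} (h : IsBipathInterior A x p q) :
    IsBipathInterior A x q p :=
  ⟨fun w => (h.1 w).trans or_comm, fun w => (h.2 w).trans or_comm⟩

theorem ncard_setOf_exists_arc_le [Finite V] (P : V → Prop) (d : ℕ)
    (hP : ∀ s, P s → indeg A s ≤ d) :
    {u | ∃ s, A u s ∧ P s}.ncard ≤ d * {s | P s}.ncard := by
  classical
  have : Fintype V := Fintype.ofFinite V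
  let t : Finset V := Finset.univ.filter P
  have hunion : {u | ∃ s, A u s ∧ P s} = ⋃ s ∈ t, {u | A u s} := by
    ext u; simp [t, and_comm]
  calc {u | ∃ s, A u s ∧ P s}.ncard ≤ ∑ s ∈ t, {u | A u s}.ncard :=
        hunion ▸ t.set_ncard_biUnion_le _
    _ ≤ t.card • d := Finset.sum_le_card_nsmul _ _ _ fun s hs => hP s (by simpa [t] using hs)
    _ = d * {s | P s}.ncard := by
        rw [smul_eq_mul, mul_comm, ← Set.ncard_coe_finset]; simp [t]

theorem eq_or_eq_of_indeg_le_two [Finite V] {x a b u : V} (hx : indeg A x ≤ 2) (hab : a ≠ b)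
    (ha : A a x) (hb : A b x) (hu : A u x) : u = a ∨ u = b := by
  by_contra! h
  have : 2 < indeg A x :=
    (Set.two_lt_ncard_iff (Set.toFinite _)).2 ⟨a, b, u, ha, hb, hu, hab, h.1.symm, h.2.symm⟩
  omega

theorem indeg_le_two_of_not_special {x : V} (hx : ¬ Special A x) : indeg A x ≤ 2 := by
  unfold Special at hx
  omega

theorem arc_symm_of_not_special {x u : V} (hx : ¬ Special A x) (hu : A u x) : A x u := by
  by_contra h
  exact hx (Or.inr ⟨u, hu, h⟩)

theorem arc_symm_of_not_pointsToSpecial {x w : V} (hx : ¬ PointsToSpecial A x) (hw : A x w) :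
    A w x :=
  arc_symm_of_not_special (fun hs => hx ⟨w, hw, hs⟩) hw

theorem mem_of_reachesAvoiding {S C : Set V} (hC : ∀ x ∈ C, ∀ u, A u x → u ∈ C ∪ S)
    {u v : V} (h : ReachesAvoiding A S u v) (hv : v ∈ C) : u ∈ C := by
  induction h with
  | refl => exact hv
  | tail _ hbc ih => exact ih ((hC _ hv _ hbc.1).resolve_right hbc.2.1)

theorem TwoConnected.reachesAvoiding {r : V} (h2 : TwoConnected A r) {S : Set V}
    (hS : S.ncard ≤ 1) (hr : r ∉ S) {z : V} (hz : z ∉ S) : ReachesAvoiding A S r z := by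
  by_contra h
  exact h2 S hS ⟨hr, z, hz, h⟩

theorem TwoConnected.root_mem_of_isInClosed {r v : V} (h2 : TwoConnected A r) {C : Set V}
    (hC : IsInClosed A C) (hv : v ∈ C) : r ∈ C :=
  mem_of_reachesAvoiding (S := ∅) (by simpa [IsInClosed] using hC)
    (h2.reachesAvoiding (by simp) (by simp) (by simp)) hv

theorem TwoConnected.exists_ne_arc {r v x : V} (h2 : TwoConnected A r) (hvr : v ≠ r)
    (hxr : x ≠ r) (hxv : x ≠ v) : ∃ u ≠ v, A u x := by
  by_contra! h
  have hreach := h2.reachesAvoiding (by simp) (Set.notMem_singleton_iff.2 hvr.symm)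
    (Set.notMem_singleton_iff.2 hxv)
  refine hxr (mem_of_reachesAvoiding (C := {x}) ?_ hreach rfl).symm
  rintro y rfl u hu
  exact Or.inr (by_contra fun hne => h u hne hu)

theorem isBipath4_of_isBipathInterior {x : Fin 5 → V} (hx : Function.Injective x)
    (h1 : IsBipathInterior A (x 1) (x 0) (x 2)) (h2 : IsBipathInterior A (x 2) (x 1) (x 3))
    (h3 : IsBipathInterior A (x 3) (x 2) (x 4)) : IsBipath4 A x := by
  refine ⟨hx, fun i h0 h4 => ?_⟩
  fin_cases i
  all_goals first | assumption | simp at h0 h4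

theorem exists_isBipathInterior [Finite V] {r v x : V} (hD : IsRootedDigraph A r)
    (h2 : TwoConnected A r) (hvr : v ≠ r) (hvx : A v x) (hx : ¬ Special A x)
    (hxS : ¬ PointsToSpecial A x) : ∃ y ≠ v, IsBipathInterior A x v y := by
  have hxr : x ≠ r := fun h => hD.2.1 v (h ▸ hvx)
  have hxv : x ≠ v := fun h => hD.1 v (h ▸ hvx)
  obtain ⟨y, hyv, hyx⟩ := h2.exists_ne_arc hvr hxr hxv
  have hin : ∀ w, A w x ↔ w = v ∨ w = y := fun w =>
    ⟨eq_or_eq_of_indeg_le_two (indeg_le_two_of_not_special hx) hyv.symm hvx hyx,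
      by rintro (rfl | rfl) <;> assumption⟩
  exact ⟨y, hyv, fun w => ⟨fun hw => (hin w).1 (arc_symm_of_not_pointsToSpecial hxS hw),
    fun hw => arc_symm_of_not_special hx ((hin w).2 hw)⟩, hin⟩

theorem isBipath4_or_isInClosed [Finite V] {a' a v b b' : V} (hloop : ∀ x, ¬ A x x)
    (ha : IsBipathInterior A a a' v) (hv : IsBipathInterior A v a b)
    (hb : IsBipathInterior A b v b') (hab : a ≠ b) (ha'v : a' ≠ v) (hvb' : v ≠ b')
    (ha' : indeg A a' ≤ 2) :
    IsBipath4 A ![a', a, v, b, b'] ∨ IsInClosed A {a', a, v, b, b'} := by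
  have hav : a ≠ v := fun h => hloop a ((ha.1 a).2 (Or.inr h))
  have hbv : b ≠ v := fun h => hloop b ((hb.1 b).2 (Or.inl h))
  by_cases hdistinct : a' ≠ b ∧ a' ≠ b' ∧ a ≠ b'
  · obtain ⟨ha'b, ha'b', hab'⟩ := hdistinct
    have ha'a : a' ≠ a := fun h => hloop a ((ha.1 a).2 (Or.inl h.symm))
    have hvb : v ≠ b := hbv.symm
    have hbb' : b ≠ b' := fun h => hloop b ((hb.1 b).2 (Or.inr h))
    refine Or.inl (isBipath4_of_isBipathInterior ?_ ha hv hb)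
    simp only [Matrix.vecCons, Fin.cons_injective_iff]
    simp [Matrix.range_cons, Function.injective_of_subsingleton, *]
  right
  have hcoincide : (a' = b ∧ a = b') ∨ a' = b' := by
    have of_two_cycle : A a b → A b a → a' = b ∧ a = b' := fun hab hba =>
      ⟨(((ha.2 b).1 hba).resolve_right hbv).symm, ((hb.2 a).1 hab).resolve_left hav⟩
    simp only [not_and_or, not_not] at hdistinct
    rcases hdistinct with h | h | h
    · exact Or.inl (of_two_cycle ((ha.1 b).2 (Or.inl h.symm)) ((ha.2 b).2 (Or.inl h.symm)))
    · exact Or.inr h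
    · exact Or.inl (of_two_cycle ((hb.2 a).2 (Or.inr h)) ((hb.1 a).2 (Or.inr h)))
  set C : Set V := {a', a, v, b, b'}
  have in_a : ∀ u, A u a → u ∈ C := fun u hu => by
    rcases (ha.2 u).1 hu with rfl | rfl <;> simp [C]
  have in_v : ∀ u, A u v → u ∈ C := fun u hu => by
    rcases (hv.2 u).1 hu with rfl | rfl <;> simp [C]
  have in_b : ∀ u, A u b → u ∈ C := fun u hu => by
    rcases (hb.2 u).1 hu with rfl | rfl <;> simp [C]
  have in_a' : ∀ u, A u a' → u ∈ C := by
    rcases hcoincide with ⟨rfl, -⟩ | rfl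
    · exact in_b
    · intro u hu
      rcases eq_or_eq_of_indeg_le_two ha' hab ((ha.1 a').2 (Or.inl rfl))
        ((hb.1 a').2 (Or.inr rfl)) hu with rfl | rfl <;> simp [C]
  have in_b' : ∀ u, A u b' → u ∈ C := by
    rcases hcoincide with ⟨-, rfl⟩ | rfl
    · exact in_a
    · exact in_a'
  rintro x (rfl | rfl | rfl | rfl | rfl)
  exacts [in_a', in_a, in_v, in_b, in_b']

theorem exists_arc_pointsToSpecial [Finite V] {r v : V} (hD : IsRootedDigraph A r)
    (h2 : TwoConnected A r) (hnobp : ¬ ∃ x : Fin 5 → V, IsBipath4 A x)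
    (hv : NonSpecial A r v) (hvS : ¬ PointsToSpecial A v) :
    ∃ a, A v a ∧ PointsToSpecial A a := by
  obtain ⟨hvr, a, b, hab, hin, hva, hvb⟩ := hv
  by_contra! hS
  have hin' : ∀ w, A w v ↔ w = a ∨ w = b := fun w => Set.ext_iff.1 hin w
  have hv' : IsBipathInterior A v a b :=
    ⟨fun w => ⟨fun hw => (hin' w).1 (arc_symm_of_not_pointsToSpecial hvS hw),
      by rintro (rfl | rfl) <;> assumption⟩, hin'⟩
  have not_special : ∀ w, A v w → ¬ Special A w := fun w hw hs => hvS ⟨w, hw, hs⟩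
  obtain ⟨a', ha'v, ha⟩ := exists_isBipathInterior hD h2 hvr hva (not_special a hva) (hS a hva)
  obtain ⟨b', hb'v, hb⟩ := exists_isBipathInterior hD h2 hvr hvb (not_special b hvb) (hS b hvb)
  have haa' : A a a' := (ha.1 a').2 (Or.inr rfl)
  have ha' : indeg A a' ≤ 2 := indeg_le_two_of_not_special fun hs => hS a hva ⟨a', haa', hs⟩
  rcases isBipath4_or_isInClosed hD.1 ha.symm hv' hb hab ha'v hb'v.symm ha' with hbp | hC
  · exact hnobp ⟨_, hbp⟩
  · -- every vertex of the in-closed set has an in-arc, unlike the root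
    have hr := h2.root_mem_of_isInClosed hC (show v ∈ _ by simp)
    simp only [Set.mem_insert_iff, Set.mem_singleton_iff] at hr
    rcases hr with rfl | rfl | rfl | rfl | rfl
    exacts [hD.2.1 _ haa', hD.2.1 _ hva, hD.2.1 _ ((hin' _).2 (Or.inl rfl)), hD.2.1 _ hvb,
      hD.2.1 _ ((hb.1 _).2 (Or.inr rfl))]

end

/-- In a 2-connected rooted digraph with no bipath of length 4
and all indegrees at most `d`, the number of non-special vertices is at most
`3d` times the number of special vertices. -/
theorem nonspecial_bound [Fintype V] (A : V → V → Prop) (r : V) (d : ℕ)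
    (hD : IsRootedDigraph A r) (h2 : TwoConnected A r)
    (hnobp : ¬ ∃ x : Fin 5 → V, IsBipath4 A x)
    (hdeg : ∀ v, indeg A v ≤ d) :
    {v | NonSpecial A r v}.ncard ≤ 3 * d * {v | Special A v}.ncard := by
  set X := {u | PointsToSpecial A u}
  set Y := {v | ∃ a, A v a ∧ (a ∈ X ∧ ¬ Special A a)}
  have hX : X.ncard ≤ d * {v | Special A v}.ncard :=
    ncard_setOf_exists_arc_le (A := A) (Special A) d fun s _ => hdeg s
  have hY : Y.ncard ≤ 2 * X.ncard :=
    (ncard_setOf_exists_arc_le (A := A) _ 2 fun a ha => indeg_le_two_of_not_special ha.2).trans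
      (Nat.mul_le_mul_left 2 (Set.ncard_le_ncard fun a ha => ha.1))
  have hN : {v | NonSpecial A r v} ⊆ X ∪ Y := by
    intro v hv
    by_cases hvX : PointsToSpecial A v
    · exact Or.inl hvX
    · obtain ⟨a, hva, ha⟩ := exists_arc_pointsToSpecial hD h2 hnobp hv hvX
      exact Or.inr ⟨a, hva, ha, fun hs => hvX ⟨a, hva, hs⟩⟩
  calc {v | NonSpecial A r v}.ncard ≤ (X ∪ Y).ncard := Set.ncard_le_ncard hN
    _ ≤ X.ncard + Y.ncard := Set.ncard_union_le X Y
    _ ≤ 3 * X.ncard := by omega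
    _ ≤ 3 * d * {v | Special A v}.ncard := by
      rw [mul_assoc]
      exact Nat.mul_le_mul_left 3 hX
end
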